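/- arXiv:2006.16597 — 3 statements merged into one kernel-verified Lean document; each statement's English description precedes it below -/
import Mathlib

section
/- Let ε ∈ (0,1) and u > 0. Assume F_{σ²} is continuous and σ² satisfies the α-exponent (margin) assumption at λ_ε with constants c* > 0 and α ≥ 0. Let g, s : ℝ^d → ℝ be measurable with h := sup_{x ∈ 𝒞} |s(x) − σ²(x)| < ∞, where 𝒞 is the support of P_X. Let ζ be uniformly distributed on [0,u] and independent of (X,Y), set s̄(x,ζ) = s(x) + ζ, let F_{s̄}(t) = P(s̄(X,ζ) ≤ t) and λ̃_ε = F_{s̄}^{-1}(1−ε), and let Γ̃ be the randomized predictor with reject option that predicts g(x) iff s̄(x,ζ) ≤ λ̃_ε. Then E_ε(Γ̃) ≤ E[(g(X) − f*(X))²] + C(h^{1+α} + u^{1+α}), where C > 0 depends only on c* and α. -/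
open MeasureTheory ProbabilityTheory Set

noncomputable section

/-- `ℝ^d` with its Euclidean structure. -/
abbrev Euc (d : ℕ) := EuclideanSpace ℝ (Fin d)

namespace ERAux

open Filter

lemma smeas_comap {Ω β : Type*} [MeasurableSpace β] {X : Ω → β} {k : β → ℝ} (hk : Measurable k) :
    StronglyMeasurable[MeasurableSpace.comap X inferInstance] (fun ω => k (X ω)) :=
  (hk.comp (measurable_iff_comap_le.mpr le_rfl)).stronglyMeasurable

variable {Ω : Type} {m0 : MeasurableSpace Ω} {μ : Measure Ω}

lemma integral_ite {P : Ω → Prop} [DecidablePred P] (hP : MeasurableSet {ω | P ω}) :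
    ∫ ω, (if P ω then (1:ℝ) else 0) ∂μ = (μ {ω | P ω}).toReal := by
  have h : (fun ω => if P ω then (1:ℝ) else 0) = Set.indicator {ω | P ω} (fun _ => (1:ℝ)) := by
    funext ω; simp [Set.indicator_apply, Set.mem_setOf_eq]
  rw [h, integral_indicator_const (1:ℝ) hP, smul_eq_mul, mul_one, measureReal_def]

lemma integrable_mul_ite {f : Ω → ℝ} (hf : Integrable f μ) {P : Ω → Prop} [DecidablePred P]
    (hP : MeasurableSet {ω | P ω}) :
    Integrable (fun ω => f ω * (if P ω then (1:ℝ) else 0)) μ := by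
  have h1 : Integrable (fun ω => (if P ω then (1:ℝ) else 0) * f ω) μ := by
    refine hf.bdd_mul (c := 1)
      ((measurable_const.ite hP measurable_const).aestronglyMeasurable)
      (Eventually.of_forall fun ω => ?_)
    by_cases hp : P ω <;> simp [hp]
  exact h1.congr (Eventually.of_forall fun ω => mul_comm _ _)

lemma integral_mul_condexp {m : MeasurableSpace Ω} (hm : m ≤ m0)
    [IsProbabilityMeasure μ] {W K q : Ω → ℝ} (hW : Integrable W μ)
    (hq : StronglyMeasurable[m] q) (hqb : ∀ ω, ‖q ω‖ ≤ 1)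
    (hK : K =ᵐ[μ] μ[W|m]) :
    ∫ ω, q ω * W ω ∂μ = ∫ ω, q ω * K ω ∂μ := by
  haveI : SigmaFinite (μ.trim hm) := inferInstance
  have hqW : Integrable (fun ω => q ω * W ω) μ :=
    hW.bdd_mul ((hq.mono hm).aestronglyMeasurable) (Filter.Eventually.of_forall hqb)
  have h1 : μ[(fun ω => q ω * W ω)|m] =ᵐ[μ] fun ω => q ω * K ω := by
    have h2 := condExp_mul_of_stronglyMeasurable_left hq hqW hW
    filter_upwards [h2, hK] with ω h2ω hKω
    rw [hKω]; exact h2ω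
  calc ∫ ω, q ω * W ω ∂μ = ∫ ω, (μ[(fun ω => q ω * W ω)|m]) ω ∂μ :=
        (integral_condExp hm).symm
    _ = ∫ ω, q ω * K ω ∂μ := integral_congr_ae h1

lemma key {d : ℕ} [IsProbabilityMeasure μ] {X : Ω → Euc d} {Y ζ : Ω → ℝ}
    (hX : Measurable X) (hY : Measurable Y) (hζ : Measurable ζ)
    (hind : IndepFun (fun ω => (X ω, Y ω)) ζ μ)
    {s : Euc d → ℝ} (hs : Measurable s)
    {F : Euc d × ℝ → ℝ} (hF : Measurable F)
    (hFi : Integrable (fun ω => F (X ω, Y ω)) μ)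
    {k : Euc d → ℝ} (hk : Measurable k)
    (hcond : (fun ω => k (X ω)) =ᵐ[μ]
      μ[(fun ω => F (X ω, Y ω)) | MeasurableSpace.comap X inferInstance])
    (c : ℝ) :
    ∫ ω, F (X ω, Y ω) * (if s (X ω) + ζ ω ≤ c then (1:ℝ) else 0) ∂μ
      = ∫ ω, k (X ω) * (if s (X ω) + ζ ω ≤ c then (1:ℝ) else 0) ∂μ := by
  have hXY : Measurable (fun ω => (X ω, Y ω)) := hX.prodMk hY
  set ν := Measure.map (fun ω => (X ω, Y ω)) μ with hν
  set ρ := Measure.map ζ μ with hρ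
  haveI : IsProbabilityMeasure ρ := Measure.isProbabilityMeasure_map hζ.aemeasurable
  haveI : IsProbabilityMeasure ν := Measure.isProbabilityMeasure_map hXY.aemeasurable
  have hjoint : Measure.map (fun ω => ((X ω, Y ω), ζ ω)) μ = ν.prod ρ :=
    (indepFun_iff_map_prod_eq_prod_map_map hXY.aemeasurable hζ.aemeasurable).mp hind
  set w : Euc d → ℝ := fun x => (ρ {z | s x + z ≤ c}).toReal with hwdef
  have hw_eq : ∀ x, w x = (ρ (Iic (c - s x))).toReal := by
    intro x
    have : {z | s x + z ≤ c} = Iic (c - s x) := by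
      ext z; simp only [Set.mem_setOf_eq, Set.mem_Iic]; constructor <;> intro <;> linarith
    show (ρ {z | s x + z ≤ c}).toReal = _
    rw [this]
  have hwmono : Antitone (fun t : ℝ => (ρ (Iic (c - t))).toReal) := by
    intro t1 t2 h12
    exact ENNReal.toReal_mono (measure_ne_top _ _)
      (measure_mono (Iic_subset_Iic.mpr (by linarith)))
  have hw : Measurable w := by
    have : w = (fun t => (ρ (Iic (c - t))).toReal) ∘ s := funext hw_eq
    rw [this]; exact hwmono.measurable.comp hs
  have hwb : ∀ x, ‖w x‖ ≤ 1 := by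
    intro x
    rw [Real.norm_eq_abs, abs_of_nonneg ENNReal.toReal_nonneg]
    exact ENNReal.toReal_le_of_le_ofReal zero_le_one (by simpa using prob_le_one)
  -- sub-claim
  have sub : ∀ H : Euc d × ℝ → ℝ, Measurable H → Integrable (fun ω => H (X ω, Y ω)) μ →
      ∫ ω, H (X ω, Y ω) * (if s (X ω) + ζ ω ≤ c then (1:ℝ) else 0) ∂μ
        = ∫ ω, H (X ω, Y ω) * w (X ω) ∂μ := by
    intro H hH hHi
    set G : (Euc d × ℝ) × ℝ → ℝ :=
      fun q => H q.1 * (if s q.1.1 + q.2 ≤ c then (1:ℝ) else 0) with hGdef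
    have hGmeas : Measurable G := by
      apply (hH.comp measurable_fst).mul
      exact Measurable.ite
        (measurableSet_le ((hs.comp (measurable_fst.comp measurable_fst)).add measurable_snd)
          measurable_const) measurable_const measurable_const
    have hHν : Integrable H ν :=
      (integrable_map_measure hH.aestronglyMeasurable hXY.aemeasurable).mpr hHi
    have hmapfst : Measure.map Prod.fst (ν.prod ρ) = ν := by
      rw [Measure.map_fst_prod]; simp
    have hHfst : Integrable (fun q : (Euc d × ℝ) × ℝ => H q.1) (ν.prod ρ) := by
      rw [← hmapfst] at hHν
      exact (integrable_map_measure hH.aestronglyMeasurable measurable_fst.aemeasurable).mp hHν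
    have hGint : Integrable G (ν.prod ρ) := by
      refine hHfst.norm.mono' hGmeas.aestronglyMeasurable ?_
      refine Filter.Eventually.of_forall fun q => ?_
      rw [hGdef]
      simp only [norm_mul]
      by_cases hq : s q.1.1 + q.2 ≤ c <;> simp [hq]
    calc ∫ ω, H (X ω, Y ω) * (if s (X ω) + ζ ω ≤ c then (1:ℝ) else 0) ∂μ
        = ∫ q, G q ∂(ν.prod ρ) := by
          rw [← hjoint, integral_map (hXY.prodMk hζ).aemeasurable hGmeas.aestronglyMeasurable]
      _ = ∫ p, ∫ z, G (p, z) ∂ρ ∂ν := integral_prod G hGint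
      _ = ∫ p, H p * w p.1 ∂ν := by
          refine integral_congr_ae (Filter.Eventually.of_forall fun p => ?_)
          have h1 : ∫ z, G (p, z) ∂ρ
              = H p * ∫ z, (if s p.1 + z ≤ c then (1:ℝ) else 0) ∂ρ := by
            simp only [hGdef]
            exact integral_const_mul _ _
          have hii := ERAux.integral_ite (μ := ρ) (P := fun z => s p.1 + z ≤ c)
            (measurableSet_le (measurable_const.add measurable_id) measurable_const)
          show (∫ z, G (p, z) ∂ρ) = H p * w p.1
          rw [h1, hii]
      _ = ∫ ω, H (X ω, Y ω) * w (X ω) ∂μ := by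
          have hmeas : Measurable fun p : Euc d × ℝ => H p * w p.1 :=
            hH.mul (hw.comp measurable_fst)
          have := integral_map (μ := μ) hXY.aemeasurable
            (f := fun p : Euc d × ℝ => H p * w p.1) hmeas.aestronglyMeasurable
          rw [hν]
          exact this
  have hkXi : Integrable (fun ω => k (X ω)) μ := integrable_condExp.congr hcond.symm
  have hm : MeasurableSpace.comap X inferInstance ≤ m0 := measurable_iff_comap_le.mp hX
  calc ∫ ω, F (X ω, Y ω) * (if s (X ω) + ζ ω ≤ c then (1:ℝ) else 0) ∂μ
      = ∫ ω, F (X ω, Y ω) * w (X ω) ∂μ := sub F hF hFi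
    _ = ∫ ω, w (X ω) * F (X ω, Y ω) ∂μ := by simp_rw [mul_comm]
    _ = ∫ ω, w (X ω) * k (X ω) ∂μ :=
        integral_mul_condexp hm hFi (ERAux.smeas_comap hw) (fun ω => hwb (X ω)) hcond
    _ = ∫ ω, k (X ω) * w (X ω) ∂μ := by simp_rw [mul_comm]
    _ = ∫ ω, k (X ω) * (if s (X ω) + ζ ω ≤ c then (1:ℝ) else 0) ∂μ :=
        (sub (fun p => k p.1) (hk.comp measurable_fst) hkXi).symm

end ERAux

set_option maxHeartbeats 1000000 in
/-- excess-risk bound for the smoothed (randomized) pseudo-oracle predictor,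
with a constant depending only on `c*` and `α`. -/
theorem excess_risk_randomized_pseudo_oracle
    (cstar α : ℝ) (hcstar : 0 < cstar) (hα : 0 ≤ α) :
    ∃ C : ℝ, 0 < C ∧
    ∀ (Ω : Type) (_ : MeasurableSpace Ω) (μ : Measure Ω) (_ : IsProbabilityMeasure μ)
      (d : ℕ) (X : Ω → Euc d) (Y : Ω → ℝ) (ζ : Ω → ℝ),
      Measurable X → Measurable Y → Measurable ζ →
      Integrable (fun ω => (Y ω) ^ 2) μ →
      ∀ (fstar sigma2 : Euc d → ℝ),
      Measurable fstar → Measurable sigma2 →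
      -- `f*` is (a version of) the conditional expectation `E[Y | X]`
      (fun ω => fstar (X ω)) =ᵐ[μ] μ[Y | MeasurableSpace.comap X inferInstance] →
      -- `σ²` is (a version of) the conditional variance `E[(Y - f*(X))² | X]`
      ((fun ω => sigma2 (X ω)) =ᵐ[μ]
        μ[(fun ω => (Y ω - fstar (X ω)) ^ 2) | MeasurableSpace.comap X inferInstance]) →
      Integrable (fun ω => (Y ω - fstar (X ω)) ^ 2) μ →
      -- the cdf `F_{σ²}` is continuous
      (Continuous fun t => (μ {ω | sigma2 (X ω) ≤ t}).toReal) →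
      ∀ (ε : ℝ), ε ∈ Set.Ioo (0 : ℝ) 1 →
      ∀ (lamε : ℝ), lamε = sInf {t : ℝ | 1 - ε ≤ (μ {ω | sigma2 (X ω) ≤ t}).toReal} →
      -- the α-exponent (margin) assumption at `λ_ε`
      (∀ t : ℝ, 0 < t →
        (μ {ω | 0 < |sigma2 (X ω) - lamε| ∧ |sigma2 (X ω) - lamε| ≤ t}).toReal ≤
          cstar * t ^ α) →
      -- `ζ` is uniform on `[0, u]` and independent of `(X, Y)`
      ∀ (u : ℝ), 0 < u →
      Measure.map ζ μ = (ENNReal.ofReal u)⁻¹ • (volume.restrict (Set.Icc (0 : ℝ) u)) →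
      IndepFun (fun ω => (X ω, Y ω)) ζ μ →
      -- `g`, `s` estimators, with `|s - σ²| ≤ h` on the support `𝒞` of `P_X`
      ∀ (g s : Euc d → ℝ), Measurable g → Measurable s →
      Integrable (fun ω => (Y ω - g (X ω)) ^ 2) μ →
      ∀ (Cset : Set (Euc d)), μ {ω | X ω ∉ Cset} = 0 →
      ∀ (h : ℝ), 0 ≤ h → (∀ x ∈ Cset, |s x - sigma2 x| ≤ h) →
      -- `λ̃_ε = F_{s̄}^{-1}(1-ε)` where `s̄(X, ζ) = s(X) + ζ`
      ∀ (lamTilde : ℝ),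
        lamTilde = sInf {t : ℝ | 1 - ε ≤ (μ {ω | s (X ω) + ζ ω ≤ t}).toReal} →
      -- excess risk bound
      ((∫ ω, (Y ω - g (X ω)) ^ 2 *
            (if s (X ω) + ζ ω ≤ lamTilde then (1 : ℝ) else 0) ∂μ)
          + lamε * (μ {ω | lamTilde < s (X ω) + ζ ω}).toReal)
        - ((∫ ω, (Y ω - fstar (X ω)) ^ 2 *
              (if sigma2 (X ω) ≤ lamε then (1 : ℝ) else 0) ∂μ)
            + lamε * (μ {ω | lamε < sigma2 (X ω)}).toReal)
      ≤ (∫ ω, (g (X ω) - fstar (X ω)) ^ 2 ∂μ) + C * (h ^ (1 + α) + u ^ (1 + α)) := by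
  classical
  refine ⟨cstar * (4:ℝ) ^ (1 + α), by positivity, ?_⟩
  intro Ω mΩ μ hμ d X Y ζ hX hY hζ hY2 fstar sigma2 hfstar hsigma2 hfcond hscond hYf2 hFcont
    ε hε lamε hlam hmargin u hu hmap hind g s hg hs hYg2 Cset hCset h hh0 hsh lamT hlamT
  haveI : IsProbabilityMeasure μ := hμ
  have hm : MeasurableSpace.comap X inferInstance ≤ mΩ := measurable_iff_comap_le.mp hX
  haveI : SigmaFinite (μ.trim hm) := inferInstance
  -- basic integrability
  have hY1 : Integrable Y μ := by
    refine (hY2.add (integrable_const 1)).mono' hY.aestronglyMeasurable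
      (Filter.Eventually.of_forall fun ω => ?_)
    simp only [Pi.add_apply]
    rw [Real.norm_eq_abs]
    nlinarith [sq_nonneg (|Y ω| - 1), sq_abs (Y ω)]
  have hfXi : Integrable (fun ω => fstar (X ω)) μ := integrable_condExp.congr hfcond.symm
  have hs2Xi : Integrable (fun ω => sigma2 (X ω)) μ := integrable_condExp.congr hscond.symm
  have hV2 : Integrable (fun ω => (g (X ω) - fstar (X ω)) ^ 2) μ := by
    refine ((hYg2.const_mul 2).add (hYf2.const_mul 2)).mono'
      (((hg.comp hX).sub (hfstar.comp hX)).pow_const 2).aestronglyMeasurable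
      (Filter.Eventually.of_forall fun ω => ?_)
    simp only [Pi.add_apply]
    rw [Real.norm_eq_abs, abs_of_nonneg (sq_nonneg _)]
    nlinarith [sq_nonneg ((Y ω - g (X ω)) + (Y ω - fstar (X ω)))]
  have hV2' : Integrable (fun ω => (fstar (X ω) - g (X ω)) ^ 2) μ :=
    hV2.congr (Filter.Eventually.of_forall fun ω => by ring)
  have hcross : Integrable (fun ω => (2 * (fstar (X ω) - g (X ω))) * (Y ω - fstar (X ω))) μ := by
    refine ((hV2.const_mul 4).add hYf2).mono'
      ((measurable_const.mul ((hfstar.comp hX).sub (hg.comp hX))).mul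
        (hY.sub (hfstar.comp hX))).aestronglyMeasurable
      (Filter.Eventually.of_forall fun ω => ?_)
    simp only [Pi.add_apply]
    rw [Real.norm_eq_abs, abs_le]
    constructor <;>
      nlinarith [sq_nonneg ((fstar (X ω) - g (X ω)) + (Y ω - fstar (X ω))),
        sq_nonneg ((fstar (X ω) - g (X ω)) - (Y ω - fstar (X ω))),
        sq_nonneg (fstar (X ω) - g (X ω)), sq_nonneg (Y ω - fstar (X ω))]
  -- Lemma A : conditional expectation of (Y - g(X))²
  have hA : (fun ω => sigma2 (X ω) + (g (X ω) - fstar (X ω)) ^ 2) =ᵐ[μ]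
      μ[(fun ω => (Y ω - g (X ω)) ^ 2)|MeasurableSpace.comap X inferInstance] := by
    have hdecomp : (fun ω => (Y ω - g (X ω)) ^ 2)
        = fun ω => ((Y ω - fstar (X ω)) ^ 2
            + (2 * (fstar (X ω) - g (X ω))) * (Y ω - fstar (X ω)))
            + (fstar (X ω) - g (X ω)) ^ 2 := by
      funext ω; ring
    have c1 := condExp_add (μ := μ) (m := MeasurableSpace.comap X inferInstance) (hYf2.add hcross) hV2'
    have c2 := condExp_add (μ := μ) (m := MeasurableSpace.comap X inferInstance) hYf2 hcross
    have c3 : μ[(fun ω => (2 * (fstar (X ω) - g (X ω))) * (Y ω - fstar (X ω)))|MeasurableSpace.comap X inferInstance]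
        =ᵐ[μ] (fun ω => 2 * (fstar (X ω) - g (X ω)))
            * μ[(fun ω => Y ω - fstar (X ω))|MeasurableSpace.comap X inferInstance] :=
      condExp_mul_of_stronglyMeasurable_left
        (ERAux.smeas_comap (k := fun x => 2 * (fstar x - g x))
          (measurable_const.mul (hfstar.sub hg))) hcross (hY1.sub hfXi)
    have c4 : μ[(fun ω => Y ω - fstar (X ω))|MeasurableSpace.comap X inferInstance] =ᵐ[μ] fun _ => (0:ℝ) := by
      have c41 := condExp_sub (μ := μ) (m := MeasurableSpace.comap X inferInstance) hY1 hfXi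
      have c42 : μ[(fun ω => fstar (X ω))|MeasurableSpace.comap X inferInstance] = fun ω => fstar (X ω) :=
        condExp_of_stronglyMeasurable hm (ERAux.smeas_comap hfstar) hfXi
      filter_upwards [c41, hfcond] with ω h41 h42
      have : (μ[Y|MeasurableSpace.comap X inferInstance] - μ[(fun ω => fstar (X ω))|MeasurableSpace.comap X inferInstance]) ω = 0 := by
        rw [c42] at *
        simp only [Pi.sub_apply]
        rw [← h42]
        ring
      rw [← this]
      exact h41
    have c5 : μ[(fun ω => (fstar (X ω) - g (X ω)) ^ 2)|MeasurableSpace.comap X inferInstance]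
        = fun ω => (fstar (X ω) - g (X ω)) ^ 2 :=
      condExp_of_stronglyMeasurable hm
        (ERAux.smeas_comap (k := fun x => (fstar x - g x) ^ 2)
          ((hfstar.sub hg).pow_const 2)) hV2'
    refine Filter.EventuallyEq.symm ?_
    rw [hdecomp]
    refine c1.trans ?_
    have hW : (fun ω => sigma2 (X ω)) =ᵐ[μ] μ[(fun ω => (Y ω - fstar (X ω)) ^ 2)|MeasurableSpace.comap X inferInstance] := hscond
    filter_upwards [c2, c3, c4, hW] with ω e2 e3 e4 e5
    simp only [Pi.add_apply, Pi.mul_apply] at *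
    rw [c5]
    rw [e2, e3, e4, ← e5]
    ring
  -- a.e. facts
  have haeC : ∀ᵐ ω ∂μ, X ω ∈ Cset := by
    rw [ae_iff]
    exact hCset
  have haeζ : ∀ᵐ ω ∂μ, ζ ω ∈ Set.Icc (0:ℝ) u := by
    rw [ae_iff]
    have heq : {ω | ¬ ζ ω ∈ Set.Icc (0:ℝ) u} = ζ ⁻¹' (Set.Icc (0:ℝ) u)ᶜ := rfl
    rw [heq, ← Measure.map_apply hζ measurableSet_Icc.compl, hmap]
    simp [Measure.restrict_apply measurableSet_Icc.compl]
  have hsb : ∀ᵐ ω ∂μ, |s (X ω) - sigma2 (X ω)| ≤ h := by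
    filter_upwards [haeC] with ω hω
    exact hsh _ hω
  -- quantile facts
  have hFσmono : ∀ t1 t2 : ℝ, t1 ≤ t2 →
      (μ {ω | sigma2 (X ω) ≤ t1}).toReal ≤ (μ {ω | sigma2 (X ω) ≤ t2}).toReal := by
    intro t1 t2 h12
    exact ENNReal.toReal_mono (measure_ne_top _ _)
      (measure_mono fun ω hω => le_trans hω h12)
  have hSne : ∃ t : ℝ, 1 - ε ≤ (μ {ω | sigma2 (X ω) ≤ t}).toReal := by
    have hmono : Monotone (fun n : ℕ => {ω | sigma2 (X ω) ≤ (n:ℝ)}) := by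
      intro a b hab ω hω
      simp only [Set.mem_setOf_eq] at hω ⊢
      exact le_trans hω (Nat.cast_le.mpr hab)
    have hunion : ⋃ n : ℕ, {ω | sigma2 (X ω) ≤ (n:ℝ)} = Set.univ := by
      ext ω
      simp only [Set.mem_iUnion, Set.mem_setOf_eq, Set.mem_univ, iff_true]
      exact exists_nat_ge (sigma2 (X ω))
    have h1 : Filter.Tendsto (fun n : ℕ => μ {ω | sigma2 (X ω) ≤ (n:ℝ)}) Filter.atTop (nhds 1) := by
      have := tendsto_measure_iUnion_atTop (μ := μ) hmono
      rw [hunion, measure_univ] at this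
      exact this
    have h2 : Filter.Tendsto (fun n : ℕ => (μ {ω | sigma2 (X ω) ≤ (n:ℝ)}).toReal)
        Filter.atTop (nhds 1) := by
      have h3 := (ENNReal.tendsto_toReal ENNReal.one_ne_top).comp h1
      simp only [Function.comp_def, ENNReal.toReal_one] at h3
      exact h3
    obtain ⟨n, hn⟩ := (h2.eventually_const_le (by linarith [hε.1] : 1 - ε < 1)).exists
    exact ⟨n, hn⟩
  have hSlb : ∃ t0 : ℝ, (μ {ω | sigma2 (X ω) ≤ t0}).toReal < 1 - ε := by
    have hanti : Antitone (fun n : ℕ => {ω | sigma2 (X ω) ≤ -(n:ℝ)}) := by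
      intro a b hab ω hω
      simp only [Set.mem_setOf_eq] at hω ⊢
      have hcast : (a:ℝ) ≤ (b:ℝ) := Nat.cast_le.mpr hab
      linarith
    have hiInter : ⋂ n : ℕ, {ω | sigma2 (X ω) ≤ -(n:ℝ)} = ∅ := by
      ext ω
      simp only [Set.mem_iInter, Set.mem_setOf_eq, Set.mem_empty_iff_false, iff_false,
        not_forall, not_le]
      obtain ⟨n, hn⟩ := exists_nat_gt (-(sigma2 (X ω)))
      exact ⟨n, by linarith⟩
    have h1 : Filter.Tendsto (fun n : ℕ => μ {ω | sigma2 (X ω) ≤ -(n:ℝ)})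
        Filter.atTop (nhds 0) := by
      have h0 := tendsto_measure_iInter_atTop (μ := μ)
        (s := fun n : ℕ => {ω | sigma2 (X ω) ≤ -(n:ℝ)})
        (fun n => (measurableSet_le (hsigma2.comp hX) measurable_const).nullMeasurableSet)
        hanti ⟨0, measure_ne_top _ _⟩
      simpa only [hiInter, measure_empty, Function.comp_def] using h0
    have h2 : Filter.Tendsto (fun n : ℕ => (μ {ω | sigma2 (X ω) ≤ -(n:ℝ)}).toReal)
        Filter.atTop (nhds 0) := by
      have h3 := (ENNReal.tendsto_toReal ENNReal.zero_ne_top).comp h1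
      simp only [Function.comp_def, ENNReal.toReal_zero] at h3
      exact h3
    obtain ⟨n, hn⟩ := (h2.eventually_lt_const (by linarith [hε.2] : (0:ℝ) < 1 - ε)).exists
    exact ⟨-(n:ℝ), hn⟩
  obtain ⟨t0, ht0⟩ := hSlb
  have hbddS : BddBelow {t : ℝ | 1 - ε ≤ (μ {ω | sigma2 (X ω) ≤ t}).toReal} := by
    refine ⟨t0, fun t ht => ?_⟩
    by_contra h'
    push_neg at h'
    exact absurd (le_trans ht (hFσmono t t0 h'.le)) (not_le.mpr ht0)
  have hlammem : 1 - ε ≤ (μ {ω | sigma2 (X ω) ≤ lamε}).toReal := by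
    rw [hlam]
    have hclosed : IsClosed {t : ℝ | 1 - ε ≤ (μ {ω | sigma2 (X ω) ≤ t}).toReal} :=
      isClosed_le continuous_const hFcont
    exact hclosed.csInf_mem hSne hbddS
  -- comparison of cdfs
  have hcomp1 : ∀ t : ℝ, (μ {ω | s (X ω) + ζ ω ≤ t}).toReal
      ≤ (μ {ω | sigma2 (X ω) ≤ t + h}).toReal := by
    intro t
    refine ENNReal.toReal_mono (measure_ne_top _ _) (measure_mono_ae ?_)
    filter_upwards [hsb, haeζ] with ω h1 h2
    intro hmem
    have hmem' : s (X ω) + ζ ω ≤ t := hmem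
    show sigma2 (X ω) ≤ t + h
    have ha := abs_le.mp h1
    have hz := h2.1
    linarith [ha.1, ha.2]
  have hcomp2 : (μ {ω | sigma2 (X ω) ≤ lamε}).toReal
      ≤ (μ {ω | s (X ω) + ζ ω ≤ lamε + h + u}).toReal := by
    refine ENNReal.toReal_mono (measure_ne_top _ _) (measure_mono_ae ?_)
    filter_upwards [hsb, haeζ] with ω h1 h2
    intro hmem
    have hmem' : sigma2 (X ω) ≤ lamε := hmem
    show s (X ω) + ζ ω ≤ lamε + h + u
    have ha := abs_le.mp h1
    have hz := h2.2
    linarith [ha.1, ha.2]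
  have hclaim1 : ∀ t : ℝ, 1 - ε ≤ (μ {ω | s (X ω) + ζ ω ≤ t}).toReal → lamε - h ≤ t := by
    intro t ht
    have h1 : 1 - ε ≤ (μ {ω | sigma2 (X ω) ≤ t + h}).toReal := le_trans ht (hcomp1 t)
    have h2 : lamε ≤ t + h := by
      rw [hlam]
      exact csInf_le hbddS h1
    linarith
  have hS'mem : 1 - ε ≤ (μ {ω | s (X ω) + ζ ω ≤ lamε + h + u}).toReal :=
    le_trans hlammem hcomp2
  have hlamTle : lamT ≤ lamε + h + u := by
    rw [hlamT]
    exact csInf_le ⟨lamε - h, fun t ht => hclaim1 t ht⟩ hS'mem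
  have hlamTge : lamε - h ≤ lamT := by
    rw [hlamT]
    exact le_csInf ⟨_, hS'mem⟩ (fun t ht => hclaim1 t ht)
  -- measurable sets
  have hmsT : MeasurableSet {ω | s (X ω) + ζ ω ≤ lamT} :=
    measurableSet_le ((hs.comp hX).add hζ) measurable_const
  have hmsS : MeasurableSet {ω | sigma2 (X ω) ≤ lamε} :=
    measurableSet_le (hsigma2.comp hX) measurable_const
  have hMmeas : MeasurableSet
      {ω | 0 < |sigma2 (X ω) - lamε| ∧ |sigma2 (X ω) - lamε| ≤ 2 * h + u} := by
    have habs : Measurable fun ω => |sigma2 (X ω) - lamε| :=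
      ((hsigma2.comp hX).sub measurable_const).abs
    exact (measurableSet_lt measurable_const habs).inter (measurableSet_le habs measurable_const)
  -- main rewriting steps
  have E1 : ∫ ω, (Y ω - g (X ω)) ^ 2 * (if s (X ω) + ζ ω ≤ lamT then (1:ℝ) else 0) ∂μ
      = ∫ ω, (sigma2 (X ω) + (g (X ω) - fstar (X ω)) ^ 2)
          * (if s (X ω) + ζ ω ≤ lamT then (1:ℝ) else 0) ∂μ :=
    ERAux.key hX hY hζ hind hs
      (F := fun p => (p.2 - g p.1) ^ 2) ((measurable_snd.sub (hg.comp measurable_fst)).pow_const 2)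
      hYg2
      (k := fun x => sigma2 x + (g x - fstar x) ^ 2)
      (hsigma2.add ((hg.sub hfstar).pow_const 2)) hA lamT
  have E2 : ∫ ω, (Y ω - fstar (X ω)) ^ 2 * (if sigma2 (X ω) ≤ lamε then (1:ℝ) else 0) ∂μ
      = ∫ ω, sigma2 (X ω) * (if sigma2 (X ω) ≤ lamε then (1:ℝ) else 0) ∂μ := by
    have h1 := ERAux.integral_mul_condexp hm
      (W := fun ω => (Y ω - fstar (X ω)) ^ 2) (K := fun ω => sigma2 (X ω))
      (q := fun ω => if sigma2 (X ω) ≤ lamε then (1:ℝ) else 0) hYf2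
      (ERAux.smeas_comap (k := fun x => if sigma2 x ≤ lamε then (1:ℝ) else 0)
        (measurable_const.ite (measurableSet_le hsigma2 measurable_const) measurable_const))
      (fun ω => by by_cases hp : sigma2 (X ω) ≤ lamε <;> simp [hp])
      hscond
    calc ∫ ω, (Y ω - fstar (X ω)) ^ 2 * (if sigma2 (X ω) ≤ lamε then (1:ℝ) else 0) ∂μ
        = ∫ ω, (if sigma2 (X ω) ≤ lamε then (1:ℝ) else 0) * (Y ω - fstar (X ω)) ^ 2 ∂μ := by
          simp_rw [mul_comm]
      _ = ∫ ω, (if sigma2 (X ω) ≤ lamε then (1:ℝ) else 0) * sigma2 (X ω) ∂μ := h1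
      _ = ∫ ω, sigma2 (X ω) * (if sigma2 (X ω) ≤ lamε then (1:ℝ) else 0) ∂μ := by
          simp_rw [mul_comm]
  -- measure of rejection regions
  have hμT : (μ {ω | lamT < s (X ω) + ζ ω}).toReal
      = 1 - ∫ ω, (if s (X ω) + ζ ω ≤ lamT then (1:ℝ) else 0) ∂μ := by
    have hint := ERAux.integral_ite (μ := μ) (P := fun ω => s (X ω) + ζ ω ≤ lamT) hmsT
    rw [hint]
    have hcompl : {ω | lamT < s (X ω) + ζ ω} = {ω | s (X ω) + ζ ω ≤ lamT}ᶜ := by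
      ext ω; simp [not_le]
    rw [hcompl, prob_compl_eq_one_sub hmsT,
      ENNReal.toReal_sub_of_le prob_le_one ENNReal.one_ne_top, ENNReal.toReal_one]
  have hμS : (μ {ω | lamε < sigma2 (X ω)}).toReal
      = 1 - ∫ ω, (if sigma2 (X ω) ≤ lamε then (1:ℝ) else 0) ∂μ := by
    have hint := ERAux.integral_ite (μ := μ) (P := fun ω => sigma2 (X ω) ≤ lamε) hmsS
    rw [hint]
    have hcompl : {ω | lamε < sigma2 (X ω)} = {ω | sigma2 (X ω) ≤ lamε}ᶜ := by
      ext ω; simp [not_le]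
    rw [hcompl, prob_compl_eq_one_sub hmsS,
      ENNReal.toReal_sub_of_le prob_le_one ENNReal.one_ne_top, ENNReal.toReal_one]
  -- integrabilities of pieces
  have hσχ : Integrable (fun ω => sigma2 (X ω)
      * (if s (X ω) + ζ ω ≤ lamT then (1:ℝ) else 0)) μ := ERAux.integrable_mul_ite (P := fun ω => s (X ω) + ζ ω ≤ lamT) hs2Xi hmsT
  have hσχs : Integrable (fun ω => sigma2 (X ω)
      * (if sigma2 (X ω) ≤ lamε then (1:ℝ) else 0)) μ := ERAux.integrable_mul_ite (P := fun ω => sigma2 (X ω) ≤ lamε) hs2Xi hmsS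
  have hV2χ : Integrable (fun ω => (g (X ω) - fstar (X ω)) ^ 2
      * (if s (X ω) + ζ ω ≤ lamT then (1:ℝ) else 0)) μ := ERAux.integrable_mul_ite (P := fun ω => s (X ω) + ζ ω ≤ lamT) hV2 hmsT
  have hlamchi1 : Integrable (fun ω => lamε * (if s (X ω) + ζ ω ≤ lamT then (1:ℝ) else 0)) μ :=
    ERAux.integrable_mul_ite (P := fun ω => s (X ω) + ζ ω ≤ lamT) (integrable_const lamε) hmsT
  have hlamchi1s : Integrable (fun ω => lamε * (if sigma2 (X ω) ≤ lamε then (1:ℝ) else 0)) μ :=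
    ERAux.integrable_mul_ite (P := fun ω => sigma2 (X ω) ≤ lamε) (integrable_const lamε) hmsS
  have hsplit : ∫ ω, (sigma2 (X ω) + (g (X ω) - fstar (X ω)) ^ 2)
        * (if s (X ω) + ζ ω ≤ lamT then (1:ℝ) else 0) ∂μ
      = (∫ ω, sigma2 (X ω) * (if s (X ω) + ζ ω ≤ lamT then (1:ℝ) else 0) ∂μ)
        + ∫ ω, (g (X ω) - fstar (X ω)) ^ 2 * (if s (X ω) + ζ ω ≤ lamT then (1:ℝ) else 0) ∂μ := by
    rw [← integral_add hσχ hV2χ]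
    refine integral_congr_ae (Filter.Eventually.of_forall fun ω => ?_)
    simp only [Pi.add_apply]
    ring
  have hV2mono : ∫ ω, (g (X ω) - fstar (X ω)) ^ 2
        * (if s (X ω) + ζ ω ≤ lamT then (1:ℝ) else 0) ∂μ
      ≤ ∫ ω, (g (X ω) - fstar (X ω)) ^ 2 ∂μ := by
    refine integral_mono_ae hV2χ hV2 (Filter.Eventually.of_forall fun ω => ?_)
    by_cases hp : s (X ω) + ζ ω ≤ lamT <;> simp [hp, sq_nonneg]
  -- the core bound via the margin assumption
  have hDint : Integrable (fun ω => (sigma2 (X ω) - lamε)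
      * ((if s (X ω) + ζ ω ≤ lamT then (1:ℝ) else 0)
        - (if sigma2 (X ω) ≤ lamε then (1:ℝ) else 0))) μ := by
    refine (((hσχ.sub hσχs).sub (hlamchi1.sub hlamchi1s)).congr
      (Filter.Eventually.of_forall fun ω => ?_))
    simp only [Pi.sub_apply]
    ring
  have hDeq : ∫ ω, (sigma2 (X ω) - lamε)
        * ((if s (X ω) + ζ ω ≤ lamT then (1:ℝ) else 0)
          - (if sigma2 (X ω) ≤ lamε then (1:ℝ) else 0)) ∂μ
      = (∫ ω, sigma2 (X ω) * (if s (X ω) + ζ ω ≤ lamT then (1:ℝ) else 0) ∂μ)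
        - (∫ ω, sigma2 (X ω) * (if sigma2 (X ω) ≤ lamε then (1:ℝ) else 0) ∂μ)
        - lamε * ((∫ ω, (if s (X ω) + ζ ω ≤ lamT then (1:ℝ) else 0) ∂μ)
          - ∫ ω, (if sigma2 (X ω) ≤ lamε then (1:ℝ) else 0) ∂μ) := by
    have e1 : ∫ ω, (sigma2 (X ω) - lamε)
          * ((if s (X ω) + ζ ω ≤ lamT then (1:ℝ) else 0)
            - (if sigma2 (X ω) ≤ lamε then (1:ℝ) else 0)) ∂μ
        = ∫ ω, (sigma2 (X ω) * (if s (X ω) + ζ ω ≤ lamT then (1:ℝ) else 0)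
              - sigma2 (X ω) * (if sigma2 (X ω) ≤ lamε then (1:ℝ) else 0))
            - (lamε * (if s (X ω) + ζ ω ≤ lamT then (1:ℝ) else 0)
              - lamε * (if sigma2 (X ω) ≤ lamε then (1:ℝ) else 0)) ∂μ := by
      refine integral_congr_ae (Filter.Eventually.of_forall fun ω => ?_)
      ring
    have i12 : Integrable (fun ω => sigma2 (X ω) * (if s (X ω) + ζ ω ≤ lamT then (1:ℝ) else 0)
        - sigma2 (X ω) * (if sigma2 (X ω) ≤ lamε then (1:ℝ) else 0)) μ := hσχ.sub hσχs
    have i34 : Integrable (fun ω => lamε * (if s (X ω) + ζ ω ≤ lamT then (1:ℝ) else 0)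
        - lamε * (if sigma2 (X ω) ≤ lamε then (1:ℝ) else 0)) μ := hlamchi1.sub hlamchi1s
    rw [e1, integral_sub i12 i34, integral_sub hσχ hσχs,
      integral_sub hlamchi1 hlamchi1s, integral_const_mul, integral_const_mul]
    ring
  have h2hu : (0:ℝ) < 2 * h + u := by linarith
  have hptwise : ∀ᵐ ω ∂μ, (sigma2 (X ω) - lamε)
        * ((if s (X ω) + ζ ω ≤ lamT then (1:ℝ) else 0)
          - (if sigma2 (X ω) ≤ lamε then (1:ℝ) else 0))
      ≤ (2 * h + u) * (if 0 < |sigma2 (X ω) - lamε| ∧ |sigma2 (X ω) - lamε| ≤ 2 * h + u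
          then (1:ℝ) else 0) := by
    filter_upwards [hsb, haeζ] with ω h1 h2
    have ha := abs_le.mp h1
    have hR0 : (0:ℝ) ≤ (2 * h + u)
        * (if 0 < |sigma2 (X ω) - lamε| ∧ |sigma2 (X ω) - lamε| ≤ 2 * h + u
            then (1:ℝ) else 0) := by
      refine mul_nonneg (by linarith) ?_
      split_ifs <;> norm_num
    by_cases hχ : s (X ω) + ζ ω ≤ lamT <;> by_cases hχs : sigma2 (X ω) ≤ lamε
    · rw [if_pos hχ, if_pos hχs, sub_self, mul_zero]
      exact hR0
    · rw [if_pos hχ, if_neg hχs]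
      push_neg at hχs
      have hub : sigma2 (X ω) - lamε ≤ 2 * h + u := by linarith [ha.1, h2.1]
      have hc1 : 0 < |sigma2 (X ω) - lamε| := abs_pos.mpr (by linarith)
      have hc2 : |sigma2 (X ω) - lamε| ≤ 2 * h + u := by
        rw [abs_of_pos (by linarith : (0:ℝ) < sigma2 (X ω) - lamε)]
        exact hub
      rw [if_pos ⟨hc1, hc2⟩, sub_zero, mul_one, mul_one]
      exact hub
    · rw [if_neg hχ, if_pos hχs]
      push_neg at hχ
      rcases eq_or_lt_of_le hχs with heq | hlt
      · have hz : sigma2 (X ω) - lamε = 0 := by rw [heq]; ring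
        rw [hz]
        simp
      · have hlb : lamε - sigma2 (X ω) ≤ 2 * h + u := by linarith [ha.2, h2.2]
        have hc1 : 0 < |sigma2 (X ω) - lamε| := abs_pos.mpr (by linarith)
        have hc2 : |sigma2 (X ω) - lamε| ≤ 2 * h + u := by
          rw [abs_of_neg (by linarith : sigma2 (X ω) - lamε < 0)]
          linarith
        rw [if_pos ⟨hc1, hc2⟩, zero_sub, mul_neg_one, mul_one, neg_sub]
        exact hlb
    · rw [if_neg hχ, if_neg hχs, sub_self, mul_zero]
      exact hR0
  have hDle : ∫ ω, (sigma2 (X ω) - lamε)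
        * ((if s (X ω) + ζ ω ≤ lamT then (1:ℝ) else 0)
          - (if sigma2 (X ω) ≤ lamε then (1:ℝ) else 0)) ∂μ
      ≤ cstar * (2 * h + u) ^ (1 + α) := by
    have hMint : Integrable (fun ω => (2 * h + u)
        * (if 0 < |sigma2 (X ω) - lamε| ∧ |sigma2 (X ω) - lamε| ≤ 2 * h + u
            then (1:ℝ) else 0)) μ := ERAux.integrable_mul_ite (P := fun ω => 0 < |sigma2 (X ω) - lamε| ∧ |sigma2 (X ω) - lamε| ≤ 2 * h + u) (integrable_const (2 * h + u)) hMmeas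
    have step1 := integral_mono_ae hDint hMint hptwise
    have step2 : ∫ ω, (2 * h + u)
        * (if 0 < |sigma2 (X ω) - lamε| ∧ |sigma2 (X ω) - lamε| ≤ 2 * h + u
            then (1:ℝ) else 0) ∂μ
        = (2 * h + u) * (μ {ω | 0 < |sigma2 (X ω) - lamε|
            ∧ |sigma2 (X ω) - lamε| ≤ 2 * h + u}).toReal := by
      have hint := ERAux.integral_ite (μ := μ)
        (P := fun ω => 0 < |sigma2 (X ω) - lamε| ∧ |sigma2 (X ω) - lamε| ≤ 2 * h + u) hMmeas
      rw [integral_const_mul, hint]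
    have step3 := hmargin (2 * h + u) h2hu
    calc ∫ ω, (sigma2 (X ω) - lamε)
          * ((if s (X ω) + ζ ω ≤ lamT then (1:ℝ) else 0)
            - (if sigma2 (X ω) ≤ lamε then (1:ℝ) else 0)) ∂μ
        ≤ (2 * h + u) * (μ {ω | 0 < |sigma2 (X ω) - lamε|
            ∧ |sigma2 (X ω) - lamε| ≤ 2 * h + u}).toReal := by rw [← step2]; exact step1
      _ ≤ (2 * h + u) * (cstar * (2 * h + u) ^ α) :=
          mul_le_mul_of_nonneg_left step3 h2hu.le
      _ = cstar * (2 * h + u) ^ (1 + α) := by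
          rw [Real.rpow_add h2hu, Real.rpow_one]; ring
  -- constant chasing
  have hCchain : cstar * (2 * h + u) ^ (1 + α)
      ≤ (cstar * (4:ℝ) ^ (1 + α)) * (h ^ (1 + α) + u ^ (1 + α)) := by
    have h1α : (0:ℝ) ≤ 1 + α := by linarith
    have e2 : (2 * h + u) ^ (1 + α) ≤ (2 * (h + u)) ^ (1 + α) :=
      Real.rpow_le_rpow (by linarith) (by linarith) h1α
    have e3 : (2 * (h + u)) ^ (1 + α) = 2 ^ (1 + α) * (h + u) ^ (1 + α) :=
      Real.mul_rpow (by norm_num) (by linarith)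
    have e4 : (h + u) ^ (1 + α) ≤ 2 ^ (1 + α) * (h ^ (1 + α) + u ^ (1 + α)) := by
      rcases le_total h u with hcase | hcase
      · have : (h + u) ^ (1 + α) ≤ (2 * u) ^ (1 + α) :=
          Real.rpow_le_rpow (by linarith) (by linarith) h1α
        have h5 : (2 * u) ^ (1 + α) = 2 ^ (1 + α) * u ^ (1 + α) :=
          Real.mul_rpow (by norm_num) hu.le
        have h6 : (0:ℝ) ≤ h ^ (1 + α) := Real.rpow_nonneg hh0 _
        have h7 : (0:ℝ) ≤ (2:ℝ) ^ (1 + α) := Real.rpow_nonneg (by norm_num) _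
        nlinarith
      · have : (h + u) ^ (1 + α) ≤ (2 * h) ^ (1 + α) :=
          Real.rpow_le_rpow (by linarith) (by linarith) h1α
        have h5 : (2 * h) ^ (1 + α) = 2 ^ (1 + α) * h ^ (1 + α) :=
          Real.mul_rpow (by norm_num) hh0
        have h6 : (0:ℝ) ≤ u ^ (1 + α) := Real.rpow_nonneg hu.le _
        have h7 : (0:ℝ) ≤ (2:ℝ) ^ (1 + α) := Real.rpow_nonneg (by norm_num) _
        nlinarith
    have e5 : (4:ℝ) ^ (1 + α) = 2 ^ (1 + α) * 2 ^ (1 + α) := by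
      rw [← Real.mul_rpow (by norm_num) (by norm_num)]
      norm_num
    have h7 : (0:ℝ) ≤ (2:ℝ) ^ (1 + α) := Real.rpow_nonneg (by norm_num) _
    calc cstar * (2 * h + u) ^ (1 + α)
        ≤ cstar * (2 ^ (1 + α) * (h + u) ^ (1 + α)) := by
          rw [← e3]; exact mul_le_mul_of_nonneg_left e2 hcstar.le
      _ ≤ cstar * (2 ^ (1 + α) * (2 ^ (1 + α) * (h ^ (1 + α) + u ^ (1 + α)))) := by
          refine mul_le_mul_of_nonneg_left ?_ hcstar.le
          exact mul_le_mul_of_nonneg_left e4 h7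
      _ = (cstar * (4:ℝ) ^ (1 + α)) * (h ^ (1 + α) + u ^ (1 + α)) := by
          rw [e5]; ring
  -- assemble
  rw [E1, E2, hμT, hμS, hsplit]
  have hkey2 : (∫ ω, sigma2 (X ω) * (if s (X ω) + ζ ω ≤ lamT then (1:ℝ) else 0) ∂μ)
        - (∫ ω, sigma2 (X ω) * (if sigma2 (X ω) ≤ lamε then (1:ℝ) else 0) ∂μ)
        - lamε * ((∫ ω, (if s (X ω) + ζ ω ≤ lamT then (1:ℝ) else 0) ∂μ)
          - ∫ ω, (if sigma2 (X ω) ≤ lamε then (1:ℝ) else 0) ∂μ)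
      ≤ (cstar * (4:ℝ) ^ (1 + α)) * (h ^ (1 + α) + u ^ (1 + α)) := by
    rw [← hDeq]
    exact hDle.trans hCchain
  have hexp : lamε * (1 - ∫ ω, (if s (X ω) + ζ ω ≤ lamT then (1:ℝ) else 0) ∂μ)
        - lamε * (1 - ∫ ω, (if sigma2 (X ω) ≤ lamε then (1:ℝ) else 0) ∂μ)
      = -(lamε * ((∫ ω, (if s (X ω) + ζ ω ≤ lamT then (1:ℝ) else 0) ∂μ)
          - ∫ ω, (if sigma2 (X ω) ≤ lamε then (1:ℝ) else 0) ∂μ)) := by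
    ring
  set I1 := ∫ ω, sigma2 (X ω) * (if s (X ω) + ζ ω ≤ lamT then (1:ℝ) else 0) ∂μ with hI1
  set I2 := ∫ ω, (g (X ω) - fstar (X ω)) ^ 2
    * (if s (X ω) + ζ ω ≤ lamT then (1:ℝ) else 0) ∂μ with hI2
  set I3 := ∫ ω, sigma2 (X ω) * (if sigma2 (X ω) ≤ lamε then (1:ℝ) else 0) ∂μ with hI3
  set J1 := ∫ ω, (if s (X ω) + ζ ω ≤ lamT then (1:ℝ) else 0) ∂μ with hJ1
  set J2 := ∫ ω, (if sigma2 (X ω) ≤ lamε then (1:ℝ) else 0) ∂μ with hJ2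
  linarith [hkey2, hV2mono, hexp]
end
end

section
/- Let X be a real random variable, (X_n)_{n≥1} a sequence of real random variables (on the same probability space), t₀ ∈ ℝ, and let C₁, C₃ > 0, γ₀ > 0, C₂ > 0 and a positive sequence (a_n) tending to infinity. Assume (i) P(|X − t₀| ≤ δ) ≤ C₁ δ^{γ₀} for all δ > 0, and (ii) for all δ > 0 and all n, almost surely P(|X_n − X| ≥ δ | X) ≤ C₂ exp(−C₃ a_n δ²). Then there exists a constant C > 0, depending only on C₁, C₂, C₃ and γ₀, such that |E[1{X_n ≥ t₀}] − E[1{X ≥ t₀}]| ≤ C a_n^{−γ₀/2} for all n. -/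
open MeasureTheory Filter

noncomputable section

lemma aux_cond_bound {Ω : Type} [mΩ : MeasurableSpace Ω] (μ : Measure Ω) [IsProbabilityMeasure μ]
    (X Y : Ω → ℝ) (hX : Measurable X) (hY : Measurable Y) (δ' r t₀ c : ℝ)
    (h : ∀ᵐ ω ∂μ,
      (μ[(fun ω' => if δ' ≤ |Y ω' - X ω'| then (1 : ℝ) else 0) |
          MeasurableSpace.comap X inferInstance]) ω ≤ c) :
    (μ ({ω | δ' ≤ |Y ω - X ω|} ∩ X ⁻¹' {x | |x - t₀| ≤ r})).toReal
      ≤ c * (μ (X ⁻¹' {x | |x - t₀| ≤ r})).toReal := by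
  have hm : MeasurableSpace.comap X inferInstance ≤ mΩ := measurable_iff_comap_le.mp hX
  set T : Set Ω := {ω | δ' ≤ |Y ω - X ω|} with hT_def
  have hT : MeasurableSet T := measurableSet_le measurable_const ((hY.sub hX).abs)
  set s : Set Ω := X ⁻¹' {x | |x - t₀| ≤ r} with hs_def
  have hs : MeasurableSet[MeasurableSpace.comap X inferInstance] s :=
    ⟨{x | |x - t₀| ≤ r},
      measurableSet_le ((measurable_id.sub_const t₀).abs) measurable_const, rfl⟩
  set f : Ω → ℝ := fun ω' => if δ' ≤ |Y ω' - X ω'| then (1 : ℝ) else 0 with hf_def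
  have hf_eq : f = T.indicator (fun _ => (1 : ℝ)) := by
    ext ω; simp [hf_def, Set.indicator_apply, hT_def, Set.mem_setOf_eq]
  have hf_int : Integrable f μ := by
    rw [hf_eq]; exact (integrable_const 1).indicator hT
  have key : (μ (T ∩ s)).toReal = ∫ ω in s, f ω ∂μ := by
    rw [hf_eq]
    rw [setIntegral_indicator hT, setIntegral_const, smul_eq_mul, mul_one, Set.inter_comm, measureReal_def]
  rw [key, ← setIntegral_condExp hm hf_int hs]
  calc ∫ ω in s, (μ[f|MeasurableSpace.comap X inferInstance]) ω ∂μ ≤ ∫ _ω in s, c ∂μ := by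
        apply integral_mono_ae (integrable_condExp.restrict) (integrable_const c)
        exact ae_restrict_of_ae h
    _ = c * (μ s).toReal := by rw [setIntegral_const, smul_eq_mul, mul_comm, measureReal_def]

lemma aux_summable (C₃ γ₀ : ℝ) (hC₃ : 0 < C₃) :
    Summable (fun k : ℕ => ((k : ℝ) + 2) ^ γ₀ * Real.exp (-(C₃ * ((k : ℝ) + 1)))) := by
  obtain ⟨M, hM⟩ : ∃ M : ℕ, γ₀ ≤ M := ⟨⌈γ₀⌉₊, Nat.le_ceil γ₀⟩
  set r := Real.exp (-C₃) with hr
  have hr0 : 0 < r := Real.exp_pos _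
  have hr1 : r < 1 := by
    rw [hr, Real.exp_lt_one_iff]; linarith
  have hbase : Summable (fun k : ℕ => (k : ℝ) ^ M * r ^ k) :=
    summable_pow_mul_geometric_of_norm_lt_one M
      (by rw [Real.norm_eq_abs, abs_of_pos hr0]; exact hr1)
  have hshift : Summable (fun k : ℕ => ((k : ℝ) + 2) ^ M * r ^ (k + 2)) := by
    have := (summable_nat_add_iff (f := fun k : ℕ => (k : ℝ) ^ M * r ^ k) 2).mpr hbase
    simpa [Nat.cast_add] using this
  refine Summable.of_nonneg_of_le ?_ ?_ (hshift.mul_left (Real.exp C₃))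
  · intro k
    have h0 : (0:ℝ) ≤ ((k : ℝ) + 2) ^ γ₀ := Real.rpow_nonneg (by positivity) _
    exact mul_nonneg h0 (Real.exp_pos _).le
  · intro k
    have h1 : ((k : ℝ) + 2) ^ γ₀ ≤ ((k : ℝ) + 2) ^ (M : ℝ) :=
      Real.rpow_le_rpow_of_exponent_le (by linarith [Nat.cast_nonneg (α := ℝ) k]) hM
    rw [Real.rpow_natCast] at h1
    have h2 : Real.exp (-(C₃ * ((k : ℝ) + 1))) = Real.exp C₃ * r ^ (k + 2) := by
      rw [hr, ← Real.exp_nat_mul, ← Real.exp_add]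
      congr 1
      push_cast
      ring
    rw [h2]
    have h3 : (0:ℝ) ≤ Real.exp C₃ * r ^ (k + 2) :=
      mul_nonneg (Real.exp_pos _).le (pow_nonneg hr0.le _)
    calc ((k : ℝ) + 2) ^ γ₀ * (Real.exp C₃ * r ^ (k + 2))
        ≤ ((k : ℝ) + 2) ^ M * (Real.exp C₃ * r ^ (k + 2)) :=
          mul_le_mul_of_nonneg_right h1 h3
      _ = Real.exp C₃ * (((k : ℝ) + 2) ^ M * r ^ (k + 2)) := by ring

/-- peeling lemma: if `X` has no atom-like concentration around `t₀`
(hypothesis (i)) and `X_n` concentrates around `X` conditionally on `X` at rate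
`exp(-C₃ aₙ δ²)` (hypothesis (ii)), then
`|E[1{Xₙ ≥ t₀}] - E[1{X ≥ t₀}]| ≤ C aₙ^{-γ₀/2}` with `C` depending only on
`C₁, C₂, C₃, γ₀`. -/
theorem peeling_threshold_comparison
    (C₁ C₂ C₃ γ₀ : ℝ) (hC₁ : 0 < C₁) (hC₂ : 0 < C₂) (hC₃ : 0 < C₃) (hγ₀ : 0 < γ₀) :
    ∃ C : ℝ, 0 < C ∧
      ∀ (Ω : Type) (_ : MeasurableSpace Ω) (μ : Measure Ω) (_ : IsProbabilityMeasure μ)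
        (X : Ω → ℝ) (Xn : ℕ → Ω → ℝ),
        Measurable X → (∀ n, Measurable (Xn n)) →
        ∀ (t₀ : ℝ) (a : ℕ → ℝ),
        (∀ n, 0 < a n) → Tendsto a atTop atTop →
        -- (i) no concentration of `X` around `t₀`
        (∀ δ : ℝ, 0 < δ → (μ {ω | |X ω - t₀| ≤ δ}).toReal ≤ C₁ * δ ^ γ₀) →
        -- (ii) conditional concentration of `Xₙ` around `X`
        (∀ (n : ℕ) (δ : ℝ), 0 < δ →
          ∀ᵐ ω ∂μ,
            (μ[(fun ω' => if δ ≤ |Xn n ω' - X ω'| then (1 : ℝ) else 0) |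
                MeasurableSpace.comap X inferInstance]) ω ≤
              C₂ * Real.exp (-(C₃ * a n * δ ^ 2))) →
        ∀ n : ℕ,
          |(μ {ω | t₀ ≤ Xn n ω}).toReal - (μ {ω | t₀ ≤ X ω}).toReal| ≤
            C * (a n) ^ (-(γ₀ / 2)) := by
  set b : ℕ → ℝ := fun k => C₁ * C₂ * (((k:ℝ) + 2) ^ γ₀ * Real.exp (-(C₃ * ((k:ℝ) + 1))))
    with hb_def
  have hb_sum : Summable b := (aux_summable C₃ γ₀ hC₃).mul_left _
  have hb_nonneg : ∀ k, 0 ≤ b k := by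
    intro k
    have h0 : (0:ℝ) ≤ ((k:ℝ) + 2) ^ γ₀ := Real.rpow_nonneg (by positivity) _
    have h1 : (0:ℝ) ≤ Real.exp (-(C₃ * ((k:ℝ) + 1))) := (Real.exp_pos _).le
    positivity
  have hS_nonneg : 0 ≤ ∑' k, b k := tsum_nonneg hb_nonneg
  refine ⟨C₁ + ∑' k, b k, by linarith, ?_⟩
  intro Ω mΩ μ hμ X Xn hX hXn t₀ a ha hatop hi hii n
  set δ : ℝ := (a n) ^ (-(1/2) : ℝ) with hδ_def
  have hδ : 0 < δ := Real.rpow_pos_of_pos (ha n) _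
  have hδγ : δ ^ γ₀ = (a n) ^ (-(γ₀ / 2)) := by
    rw [hδ_def, ← Real.rpow_mul (ha n).le]
    congr 1
    ring
  have haδ2 : a n * δ ^ 2 = 1 := by
    have h2 : δ ^ (2:ℕ) = (a n)⁻¹ := by
      rw [hδ_def, ← Real.rpow_natCast ((a n) ^ (-(1/2) : ℝ)) 2, ← Real.rpow_mul (ha n).le]
      norm_num
      exact Real.rpow_neg_one _
    rw [h2]
    exact mul_inv_cancel₀ (ha n).ne'
  set E : ℕ → Set Ω := fun k =>
    {ω | δ * ((k:ℝ) + 1) ≤ |Xn n ω - X ω|} ∩ X ⁻¹' {x | |x - t₀| ≤ δ * ((k:ℝ) + 2)}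
    with hE_def
  set Ball : Set Ω := X ⁻¹' {x | |x - t₀| ≤ δ} with hBall_def
  set cover : Set Ω := Ball ∪ ⋃ k, E k with hcover_def
  -- covering of the symmetric difference
  have hcov : ∀ ω, ω ∈ ({ω | t₀ ≤ Xn n ω} \ {ω | t₀ ≤ X ω}) ∪
      ({ω | t₀ ≤ X ω} \ {ω | t₀ ≤ Xn n ω}) → ω ∈ cover := by
    intro ω hω
    have h1 : |X ω - t₀| ≤ |Xn n ω - X ω| := by
      rcases hω with ⟨h1, h2⟩ | ⟨h1, h2⟩ <;>
        simp only [Set.mem_setOf_eq, not_le] at h1 h2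
      · have := le_abs_self (Xn n ω - X ω)
        rw [abs_of_nonpos (by linarith)]
        linarith
      · have := neg_abs_le (Xn n ω - X ω)
        rw [abs_of_nonneg (by linarith)]
        linarith
    by_cases hball : |X ω - t₀| ≤ δ
    · exact Or.inl hball
    · push_neg at hball
      set q := |X ω - t₀| / δ with hq_def
      have hq : 1 < q := (one_lt_div hδ).mpr hball
      have hδq : δ * q = |X ω - t₀| := by
        rw [hq_def]; field_simp
      have hfl : 1 ≤ ⌊q⌋₊ := Nat.le_floor (by exact_mod_cast hq.le)
      have hcast : ((⌊q⌋₊ - 1 : ℕ) : ℝ) + 1 = (⌊q⌋₊ : ℝ) := by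
        have h := Nat.succ_pred_eq_of_pos hfl
        exact_mod_cast h
      refine Or.inr (Set.mem_iUnion.mpr ⟨⌊q⌋₊ - 1, ?_, ?_⟩)
      · show δ * (((⌊q⌋₊ - 1 : ℕ) : ℝ) + 1) ≤ |Xn n ω - X ω|
        rw [hcast]
        have h2 : (⌊q⌋₊ : ℝ) ≤ q := Nat.floor_le (by positivity)
        nlinarith
      · show |X ω - t₀| ≤ δ * (((⌊q⌋₊ - 1 : ℕ) : ℝ) + 2)
        have h2 : q < (⌊q⌋₊ : ℝ) + 1 := Nat.lt_floor_add_one q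
        have h3 : (((⌊q⌋₊ - 1 : ℕ) : ℝ) + 2) = (⌊q⌋₊ : ℝ) + 1 := by linarith [hcast]
        rw [h3]
        nlinarith
  -- measure bound on each shell
  have hEk : ∀ k : ℕ, μ (E k) ≤ ENNReal.ofReal (δ ^ γ₀ * b k) := by
    intro k
    have hδ' : 0 < δ * ((k:ℝ) + 1) := by positivity
    have hkey := aux_cond_bound μ X (Xn n) hX (hXn n) (δ * ((k:ℝ) + 1)) (δ * ((k:ℝ) + 2)) t₀
      (C₂ * Real.exp (-(C₃ * a n * (δ * ((k:ℝ) + 1)) ^ 2))) (hii n _ hδ')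
    have hi' : (μ (X ⁻¹' {x | |x - t₀| ≤ δ * ((k:ℝ) + 2)})).toReal
        ≤ C₁ * (δ * ((k:ℝ) + 2)) ^ γ₀ := hi (δ * ((k:ℝ) + 2)) (by positivity)
    have hc0 : (0:ℝ) ≤ C₂ * Real.exp (-(C₃ * a n * (δ * ((k:ℝ) + 1)) ^ 2)) := by positivity
    have step : (μ (E k)).toReal
        ≤ C₂ * Real.exp (-(C₃ * a n * (δ * ((k:ℝ) + 1)) ^ 2))
            * (C₁ * (δ * ((k:ℝ) + 2)) ^ γ₀) :=
      hkey.trans (mul_le_mul_of_nonneg_left hi' hc0)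
    have hexp_eq : C₃ * a n * (δ * ((k:ℝ) + 1)) ^ 2 = C₃ * ((k:ℝ) + 1) ^ 2 := by
      have hh : (δ * ((k:ℝ) + 1)) ^ 2 = δ ^ 2 * ((k:ℝ) + 1) ^ 2 := by ring
      rw [hh]
      calc C₃ * a n * (δ ^ 2 * ((k:ℝ) + 1) ^ 2)
          = C₃ * ((k:ℝ) + 1) ^ 2 * (a n * δ ^ 2) := by ring
        _ = C₃ * ((k:ℝ) + 1) ^ 2 := by rw [haδ2, mul_one]
    have hexp_le : Real.exp (-(C₃ * ((k:ℝ) + 1) ^ 2)) ≤ Real.exp (-(C₃ * ((k:ℝ) + 1))) := by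
      apply Real.exp_le_exp.mpr
      have hk1 : ((k:ℝ) + 1) ≤ ((k:ℝ) + 1) ^ 2 := by nlinarith [Nat.cast_nonneg (α := ℝ) k]
      have := mul_le_mul_of_nonneg_left hk1 hC₃.le
      linarith
    have hrpow : (δ * ((k:ℝ) + 2)) ^ γ₀ = δ ^ γ₀ * ((k:ℝ) + 2) ^ γ₀ :=
      Real.mul_rpow hδ.le (by positivity)
    have hP : (0:ℝ) ≤ ((k:ℝ) + 2) ^ γ₀ := Real.rpow_nonneg (by positivity) _
    have hD : (0:ℝ) ≤ δ ^ γ₀ := Real.rpow_nonneg hδ.le _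
    have final : (μ (E k)).toReal ≤ δ ^ γ₀ * b k := by
      rw [hexp_eq, hrpow] at step
      refine step.trans ?_
      rw [hb_def]
      calc C₂ * Real.exp (-(C₃ * ((k:ℝ) + 1) ^ 2)) * (C₁ * (δ ^ γ₀ * ((k:ℝ) + 2) ^ γ₀))
          = Real.exp (-(C₃ * ((k:ℝ) + 1) ^ 2)) * (C₁ * C₂ * δ ^ γ₀ * ((k:ℝ) + 2) ^ γ₀) := by
            ring
        _ ≤ Real.exp (-(C₃ * ((k:ℝ) + 1))) * (C₁ * C₂ * δ ^ γ₀ * ((k:ℝ) + 2) ^ γ₀) := by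
            apply mul_le_mul_of_nonneg_right hexp_le
            positivity
        _ = δ ^ γ₀ * (C₁ * C₂ * (((k:ℝ) + 2) ^ γ₀ * Real.exp (-(C₃ * ((k:ℝ) + 1))))) := by
            ring
    calc μ (E k) = ENNReal.ofReal ((μ (E k)).toReal) :=
          (ENNReal.ofReal_toReal (measure_ne_top μ _)).symm
      _ ≤ ENNReal.ofReal (δ ^ γ₀ * b k) := ENNReal.ofReal_le_ofReal final
  have hD : (0:ℝ) ≤ δ ^ γ₀ := Real.rpow_nonneg hδ.le _
  have hsum_b : Summable (fun k => δ ^ γ₀ * b k) := hb_sum.mul_left _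
  have htsum_nonneg : 0 ≤ ∑' k, δ ^ γ₀ * b k :=
    tsum_nonneg fun k => mul_nonneg hD (hb_nonneg k)
  have hUnion : μ (⋃ k, E k) ≤ ENNReal.ofReal (∑' k, δ ^ γ₀ * b k) := by
    calc μ (⋃ k, E k) ≤ ∑' k, μ (E k) := measure_iUnion_le _
      _ ≤ ∑' k, ENNReal.ofReal (δ ^ γ₀ * b k) := ENNReal.tsum_le_tsum hEk
      _ = ENNReal.ofReal (∑' k, δ ^ γ₀ * b k) :=
          (ENNReal.ofReal_tsum_of_nonneg (fun k => mul_nonneg hD (hb_nonneg k)) hsum_b).symm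
  have hcover_meas : (μ cover).toReal ≤ (C₁ + ∑' k, b k) * δ ^ γ₀ := by
    have h1 : μ cover ≤ μ Ball + ENNReal.ofReal (∑' k, δ ^ γ₀ * b k) :=
      (measure_union_le _ _).trans (add_le_add_right hUnion _)
    have h2 : (μ cover).toReal ≤ (μ Ball).toReal + ∑' k, δ ^ γ₀ * b k := by
      have h3 := ENNReal.toReal_mono
        (by exact ENNReal.add_ne_top.mpr ⟨measure_ne_top μ _, ENNReal.ofReal_ne_top⟩) h1
      rwa [ENNReal.toReal_add (measure_ne_top μ _) ENNReal.ofReal_ne_top,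
        ENNReal.toReal_ofReal htsum_nonneg] at h3
    have hBall : (μ Ball).toReal ≤ C₁ * δ ^ γ₀ := hi δ hδ
    have htsum : ∑' k, δ ^ γ₀ * b k = δ ^ γ₀ * ∑' k, b k := tsum_mul_left
    rw [htsum] at h2
    nlinarith
  have hAB : ∀ S1 S2 : Set Ω, S1 \ S2 ⊆ cover →
      (μ S1).toReal - (μ S2).toReal ≤ (μ cover).toReal := by
    intro S1 S2 hsub
    have h1 : μ S1 ≤ μ S2 + μ cover := by
      calc μ S1 ≤ μ (S2 ∪ cover) := measure_mono (fun ω hω => by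
            by_cases h : ω ∈ S2
            · exact Or.inl h
            · exact Or.inr (hsub ⟨hω, h⟩))
        _ ≤ μ S2 + μ cover := measure_union_le _ _
    have h2 := ENNReal.toReal_mono
      (ENNReal.add_ne_top.mpr ⟨measure_ne_top μ _, measure_ne_top μ _⟩) h1
    rw [ENNReal.toReal_add (measure_ne_top μ _) (measure_ne_top μ _)] at h2
    linarith
  have hfinal : (μ cover).toReal ≤ (C₁ + ∑' k, b k) * (a n) ^ (-(γ₀ / 2)) := by
    rwa [hδγ] at hcover_meas
  refine abs_sub_le_iff.mpr ⟨?_, ?_⟩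
  · exact (hAB _ _ (fun ω h => hcov ω (Or.inl h))).trans hfinal
  · exact (hAB _ _ (fun ω h => hcov ω (Or.inr h))).trans hfinal
end
end

section
/- There exist constants C₁ > 0 (depending only on 𝒞, μ_min and d) and C₂ > 0 (depending only on 𝒞 and d) such that for every integer 1 ≤ k_n ≤ n and every t ≥ (log(n)·k_n/(C₁ n))^{1/d}: P(sup_{x ∈ 𝒞} D_{k_n}(x) ≥ t) ≤ C₂ exp(log(n) − C₁ t^d n/k_n). -/
open MeasureTheory Set

noncomputable section

/-- A set `C ⊆ ℝ^d` is regular if small balls centered in `C` contain a uniform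
fraction of `C` (in Lebesgue measure). -/
def RegularSet {d : ℕ} (C : Set (Euc d)) : Prop :=
  ∃ c₀ r₀ : ℝ, 0 < c₀ ∧ 0 < r₀ ∧ ∀ x ∈ C, ∀ ρ : ℝ, 0 < ρ → ρ ≤ r₀ →
    c₀ * (volume (Metric.ball x ρ)).toReal ≤ (volume (C ∩ Metric.ball x ρ)).toReal

/-- `D_k(x)`: average Euclidean distance from `x` to its `k` nearest neighbors among
the points `pts 1, …, pts n` (as the minimum over all subsets of size `k` of the
average distance). -/
def avgNNDist {d n : ℕ} (k : ℕ) (pts : Fin n → Euc d) (x : Euc d) : ℝ :=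
  (k : ℝ)⁻¹ * sInf {r : ℝ | ∃ S : Finset (Fin n), S.card = k ∧ r = ∑ i ∈ S, dist (pts i) x}

set_option maxHeartbeats 1000000

section Aux
open Metric ENNReal
open scoped Classical

lemma ballMass {d : ℕ} {C : Set (Euc d)}
    {c₀ r₀ μmin : ℝ} (hμmin : 0 ≤ μmin) (hCm : MeasurableSet C)
    (hreg : ∀ x ∈ C, ∀ ρ : ℝ, 0 < ρ → ρ ≤ r₀ →
      c₀ * (volume (ball x ρ)).toReal ≤ (volume (C ∩ ball x ρ)).toReal)
    {g : Euc d → ℝ} (hg : ∀ x ∈ C, μmin ≤ g x)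
    {y : Euc d} (hy : y ∈ C) {ρ : ℝ} (hρ : 0 < ρ) (hρr : ρ ≤ r₀) :
    ENNReal.ofReal (μmin * (c₀ * ((volume (ball (0:Euc d) 1)).toReal * ρ ^ d))) ≤
      (volume.withDensity fun x => ENNReal.ofReal (g x)) (ball y ρ) := by
  have hvball : (volume (ball y ρ)).toReal
      = ρ ^ d * (volume (ball (0:Euc d) 1)).toReal := by
    rw [Measure.addHaar_ball_of_pos volume y hρ, finrank_euclideanSpace_fin,
      ENNReal.toReal_mul, ENNReal.toReal_ofReal (by positivity)]
  have hfin : volume (C ∩ ball y ρ) ≠ ⊤ :=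
    (lt_of_le_of_lt (measure_mono inter_subset_right) measure_ball_lt_top).ne
  have h1 : ENNReal.ofReal (c₀ * ((volume (ball (0:Euc d) 1)).toReal * ρ ^ d)) ≤
      volume (C ∩ ball y ρ) := by
    rw [← ENNReal.ofReal_toReal hfin]
    apply ENNReal.ofReal_le_ofReal
    have := hreg y hy ρ hρ hρr
    rw [hvball] at this
    linarith [this]
  have h2 : ∫⁻ x in C ∩ ball y ρ, ENNReal.ofReal μmin ∂volume ≤
      ∫⁻ x in C ∩ ball y ρ, ENNReal.ofReal (g x) ∂volume := by
    apply setLIntegral_mono' (hCm.inter measurableSet_ball)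
    intro x hx
    exact ENNReal.ofReal_le_ofReal (hg x hx.1)
  rw [withDensity_apply _ measurableSet_ball]
  calc ENNReal.ofReal (μmin * (c₀ * ((volume (ball (0:Euc d) 1)).toReal * ρ ^ d)))
      = ENNReal.ofReal μmin *
        ENNReal.ofReal (c₀ * ((volume (ball (0:Euc d) 1)).toReal * ρ ^ d)) := by
        rw [← ENNReal.ofReal_mul hμmin]
    _ ≤ ENNReal.ofReal μmin * volume (C ∩ ball y ρ) := mul_le_mul_right h1 _
    _ = ∫⁻ x in C ∩ ball y ρ, ENNReal.ofReal μmin ∂volume := by rw [setLIntegral_const]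
    _ ≤ ∫⁻ x in C ∩ ball y ρ, ENNReal.ofReal (g x) ∂volume := h2
    _ ≤ ∫⁻ x in ball y ρ, ENNReal.ofReal (g x) ∂volume :=
        lintegral_mono_set inter_subset_right

lemma cylMeas {α : Type*} [MeasurableSpace α] (ν : Measure α) [IsProbabilityMeasure ν]
    {n : ℕ} (B : Set α) (T : Finset (Fin n)) :
    (Measure.pi fun _ : Fin n => ν) {dn | ∀ i ∈ T, dn i ∉ B} = ν Bᶜ ^ T.card := by
  have hset : {dn : Fin n → α | ∀ i ∈ T, dn i ∉ B}
      = Set.pi univ (fun i => if i ∈ T then Bᶜ else univ) := by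
    ext dn
    simp only [mem_setOf_eq, Set.mem_pi, mem_univ, forall_true_left]
    constructor
    · intro h i
      by_cases hi : i ∈ T
      · simp [hi, h i hi]
      · simp [hi]
    · intro h i hi
      have := h i
      simp [hi] at this
      exact this
  rw [hset, Measure.pi_pi]
  have : ∀ i : Fin n, ν (if i ∈ T then Bᶜ else univ) = if i ∈ T then ν Bᶜ else 1 := by
    intro i; by_cases hi : i ∈ T <;> simp [hi]
  simp_rw [this, Finset.prod_ite_mem, Finset.univ_inter, Finset.prod_const]

lemma countTail {α : Type*} [MeasurableSpace α] (ν : Measure α) [IsProbabilityMeasure ν]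
    {n k : ℕ} (hk1 : 1 ≤ k) (hkn : k ≤ n) (B : Set α) :
    (Measure.pi fun _ : Fin n => ν)
        {dn | (Finset.univ.filter fun i => dn i ∈ B).card < k}
      ≤ (n.choose (k-1) : ℝ≥0∞) * ν Bᶜ ^ (n - k + 1) := by
  set P := Finset.powersetCard (n - k + 1) (Finset.univ : Finset (Fin n)) with hP
  have hsub : {dn : Fin n → α | (Finset.univ.filter fun i => dn i ∈ B).card < k}
      ⊆ ⋃ T ∈ P, {dn | ∀ i ∈ T, dn i ∉ B} := by
    intro dn hdn
    simp only [mem_setOf_eq] at hdn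
    set F := Finset.univ.filter fun i => dn i ∈ B with hF
    have hcard : n - k + 1 ≤ Fᶜ.card := by
      have := Finset.card_compl F
      simp only [Fintype.card_fin] at this
      omega
    obtain ⟨T, hTsub, hTcard⟩ := Finset.exists_subset_card_eq hcard
    refine mem_iUnion₂.2 ⟨T, ?_, ?_⟩
    · simpa [hP, Finset.mem_powersetCard_univ] using hTcard
    · intro i hi
      have : i ∈ Fᶜ := hTsub hi
      simp [hF, Finset.mem_compl, Finset.mem_filter] at this
      exact this
  calc (Measure.pi fun _ : Fin n => ν)
        {dn | (Finset.univ.filter fun i => dn i ∈ B).card < k}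
      ≤ ∑ T ∈ P, (Measure.pi fun _ : Fin n => ν) {dn | ∀ i ∈ T, dn i ∉ B} :=
        le_trans (measure_mono hsub) (measure_biUnion_finset_le P _)
    _ = ∑ T ∈ P, ν Bᶜ ^ (n - k + 1) := by
        apply Finset.sum_congr rfl
        intro T hT
        rw [cylMeas ν B T]
        congr 1
        simpa [hP, Finset.mem_powersetCard_univ] using hT
    _ = (P.card : ℝ≥0∞) * ν Bᶜ ^ (n - k + 1) := by
        rw [Finset.sum_const, nsmul_eq_mul]
    _ = (n.choose (k-1) : ℝ≥0∞) * ν Bᶜ ^ (n - k + 1) := by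
        congr 2
        rw [hP, Finset.card_powersetCard, Finset.card_univ, Fintype.card_fin]
        have h1 : n - k + 1 = n - (k - 1) := by omega
        rw [h1, Nat.choose_symm (by omega)]

lemma avg_bddBelow {d n : ℕ} (k : ℕ) (pts : Fin n → Euc d) (x : Euc d) :
    BddBelow {r : ℝ | ∃ S : Finset (Fin n), S.card = k ∧ r = ∑ i ∈ S, dist (pts i) x} :=
  ⟨0, fun r ⟨S, _, hr⟩ => hr ▸ Finset.sum_nonneg fun i _ => dist_nonneg⟩

lemma avg_ub {d n : ℕ} {k : ℕ} (hk1 : 1 ≤ k) (hkn : k ≤ n) (dn : Fin n → Euc d)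
    (x : Euc d) {Δ : ℝ} (hΔ : ∀ i, dist (dn i) x ≤ Δ) : avgNNDist k dn x ≤ Δ := by
  obtain ⟨S, _, hScard⟩ := Finset.exists_subset_card_eq
    (show k ≤ (Finset.univ : Finset (Fin n)).card by simpa using hkn)
  have hmem : (∑ i ∈ S, dist (dn i) x) ∈
      {r : ℝ | ∃ S : Finset (Fin n), S.card = k ∧ r = ∑ i ∈ S, dist (dn i) x} :=
    ⟨S, hScard, rfl⟩
  have hsum : (∑ i ∈ S, dist (dn i) x) ≤ (k : ℝ) * Δ := by
    calc (∑ i ∈ S, dist (dn i) x) ≤ ∑ i ∈ S, Δ := Finset.sum_le_sum fun i _ => hΔ i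
      _ = (k : ℝ) * Δ := by rw [Finset.sum_const, hScard, nsmul_eq_mul]
  have hInf : sInf {r : ℝ | ∃ S : Finset (Fin n), S.card = k ∧ r = ∑ i ∈ S, dist (dn i) x}
      ≤ (k : ℝ) * Δ := le_trans (csInf_le (avg_bddBelow k dn x) hmem) hsum
  have hkpos : (0:ℝ) < k := by exact_mod_cast hk1
  calc avgNNDist k dn x ≤ (k : ℝ)⁻¹ * ((k:ℝ) * Δ) :=
        mul_le_mul_of_nonneg_left hInf (by positivity)
    _ = Δ := by field_simp

lemma avg_count {d n : ℕ} {k : ℕ} (hk1 : 1 ≤ k) (dn : Fin n → Euc d)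
    (x : Euc d) {c : ℝ} (hc : c < avgNNDist k dn x) :
    (Finset.univ.filter fun i => dn i ∈ ball x c).card < k := by
  by_contra hge
  push_neg at hge
  obtain ⟨S, hSsub, hScard⟩ := Finset.exists_subset_card_eq hge
  have hmem : (∑ i ∈ S, dist (dn i) x) ∈
      {r : ℝ | ∃ S : Finset (Fin n), S.card = k ∧ r = ∑ i ∈ S, dist (dn i) x} :=
    ⟨S, hScard, rfl⟩
  have hkpos : (0:ℝ) < k := by exact_mod_cast hk1
  have hInf : (k:ℝ) * c < sInf {r : ℝ | ∃ S : Finset (Fin n), S.card = k ∧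
      r = ∑ i ∈ S, dist (dn i) x} := by
    calc (k:ℝ) * c < (k:ℝ) * avgNNDist k dn x := mul_lt_mul_of_pos_left hc hkpos
      _ = sInf _ := by unfold avgNNDist; field_simp
  have hsumlt : (∑ i ∈ S, dist (dn i) x) < (k : ℝ) * c := by
    have hne : S.Nonempty := Finset.card_pos.mp (by omega)
    calc (∑ i ∈ S, dist (dn i) x) < ∑ i ∈ S, c := by
          apply Finset.sum_lt_sum_of_nonempty hne
          intro i hi
          have := hSsub hi
          simp only [Finset.mem_filter, mem_ball] at this
          exact this.2
      _ = (k : ℝ) * c := by rw [Finset.sum_const, hScard, nsmul_eq_mul]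
  have := csInf_le (avg_bddBelow k dn x) hmem
  linarith

lemma sep_net {X : Type*} [MetricSpace X] {C : Set X} {ε : ℝ} (hε : 0 < ε) {K : ℝ}
    (hK : ∀ S : Finset X, ↑S ⊆ C → (∀ x ∈ S, ∀ y ∈ S, x ≠ y → ε ≤ dist x y) →
      (S.card : ℝ) ≤ K) :
    ∃ J : Finset X, ↑J ⊆ C ∧ (∀ x ∈ J, ∀ y ∈ J, x ≠ y → ε ≤ dist x y) ∧
      (∀ x ∈ C, ∃ y ∈ J, dist x y < ε) := by
  set cards : Set ℕ := {m | ∃ S : Finset X, ↑S ⊆ C ∧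
    (∀ x ∈ S, ∀ y ∈ S, x ≠ y → ε ≤ dist x y) ∧ S.card = m} with hcards
  have hne : cards.Nonempty := ⟨0, ∅, by simp⟩
  have hbdd : BddAbove cards := by
    refine ⟨Nat.floor (max K 0), ?_⟩
    rintro m ⟨S, hS1, hS2, rfl⟩
    exact Nat.le_floor (le_trans (hK S hS1 hS2) (le_max_left _ _))
  obtain ⟨S, hS1, hS2, hScard⟩ := Nat.sSup_mem hne hbdd
  refine ⟨S, hS1, hS2, ?_⟩
  intro x hx
  by_contra hcov
  push_neg at hcov
  have hxS : x ∉ S := fun hxS => absurd (hcov x hxS) (by simp [hε])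
  have : (insert x S).card ∈ cards := by
    refine ⟨insert x S, ?_, ?_, rfl⟩
    · intro z hz
      rcases Finset.mem_insert.mp (by exact_mod_cast hz) with h | h
      · exact h ▸ hx
      · exact hS1 h
    · intro a ha b hb hab
      rcases Finset.mem_insert.mp ha with ha' | ha' <;>
        rcases Finset.mem_insert.mp hb with hb' | hb'
      · exact absurd (ha'.trans hb'.symm) hab
      · subst ha'; exact hcov b hb'
      · subst hb'; rw [dist_comm]; exact hcov a ha'
      · exact hS2 a ha' b hb' hab
  have hle := le_csSup hbdd this
  rw [Finset.card_insert_of_notMem hxS, hScard] at hle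
  omega

end Aux

open scoped ENNReal in
/-- exponential deviation bound for the sup over `𝒞` of the average
distance to the `k` nearest neighbors of an i.i.d. sample with density bounded below
on a regular compact support. -/
theorem knn_distance_sup_tail_bound
    (d : ℕ) (hd : 0 < d) (C : Set (Euc d))
    (hCcomp : IsCompact C) (hCreg : RegularSet C)
    (μmin : ℝ) (hμmin : 0 < μmin) :
    ∃ C₁ : ℝ, 0 < C₁ ∧ ∃ C₂ : ℝ, 0 < C₂ ∧
      ∀ (μmax : ℝ) (g : Euc d → ℝ), Measurable g →
        (∀ x, x ∉ C → g x = 0) → (∀ x ∈ C, μmin ≤ g x ∧ g x ≤ μmax) →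
        ∀ ν : Measure (Euc d), ν = volume.withDensity (fun x => ENNReal.ofReal (g x)) →
        IsProbabilityMeasure ν →
        ∀ (n k : ℕ), 1 ≤ k → k ≤ n →
        ∀ t : ℝ, (Real.log n * k / (C₁ * n)) ^ ((1 : ℝ) / d) ≤ t →
          ((Measure.pi fun _ : Fin n => ν)
              {dn | t ≤ sSup ((avgNNDist k dn) '' C)}).toReal ≤
            C₂ * Real.exp (Real.log n - C₁ * t ^ d * n / k) := by
  classical
  obtain ⟨c₀, r₀, hc₀, hr₀, hreg⟩ := hCreg
  have hCm : MeasurableSet C := hCcomp.isClosed.measurableSet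
  set ω := (volume (Metric.ball (0:Euc d) 1)).toReal with hω
  have hωpos : 0 < ω := ENNReal.toReal_pos (Metric.measure_ball_pos volume 0 one_pos).ne'
    measure_ball_lt_top.ne
  set Δ := Metric.diam C with hΔdef
  have hΔ0 : 0 ≤ Δ := Metric.diam_nonneg
  set β : ℝ := min (1/16) (r₀ / (Δ + 1)) with hβ
  have hβpos : 0 < β := lt_min (by norm_num) (div_pos hr₀ (by linarith))
  set a : ℝ := μmin * (c₀ * (ω * β ^ d)) with ha
  have hapos : 0 < a := by positivity
  set C₁ := min (a/6) (Real.log 2 / (2 * (Δ+1)^d)) with hC₁def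
  have hlog2 : (0:ℝ) < Real.log 2 := Real.log_pos (by norm_num)
  have hΔ1d : (0:ℝ) < (Δ+1)^d := by positivity
  have hC₁pos : 0 < C₁ := lt_min (by positivity) (by positivity)
  set C₂ := max (max 1 (Real.exp (C₁ * (Δ+1)^d))) (C₁ / (a * Real.log 2)) with hC₂def
  have hC₂pos : 0 < C₂ := lt_of_lt_of_le one_pos ((le_max_left _ _).trans (le_max_left _ _))
  have hC₂1 : 1 ≤ C₂ := (le_max_left _ _).trans (le_max_left _ _)
  have hC₂exp : Real.exp (C₁ * (Δ+1)^d) ≤ C₂ := (le_max_right _ _).trans (le_max_left _ _)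
  have hC₂q : C₁ / (a * Real.log 2) ≤ C₂ := le_max_right _ _
  have hC₁a : C₁ ≤ a/6 := min_le_left _ _
  have hC₁le : C₁ ≤ Real.log 2/(2*(Δ+1)^d) := min_le_right _ _
  have hβ16 : β ≤ 1/16 := min_le_left _ _
  have hβr : β ≤ r₀/(Δ+1) := min_le_right _ _
  clear_value ω Δ β a C₁ C₂
  refine ⟨C₁, hC₁pos, C₂, hC₂pos, ?_⟩
  intro μmax g hgm hg0 hgC ν hν hνprob n k hk1 hkn t ht
  haveI := hνprob
  have hn1 : 1 ≤ n := le_trans hk1 hkn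
  have hnR : (1:ℝ) ≤ n := by exact_mod_cast hn1
  have hkR : (1:ℝ) ≤ k := by exact_mod_cast hk1
  have hlogn : 0 ≤ Real.log n := Real.log_nonneg hnR
  have hbase : 0 ≤ Real.log n * k / (C₁ * n) := by positivity
  have ht0 : 0 ≤ t := le_trans (Real.rpow_nonneg hbase _) ht
  have htd : Real.log n * k / (C₁ * n) ≤ t ^ d := by
    have h1 := Real.rpow_le_rpow (Real.rpow_nonneg hbase _) ht (Nat.cast_nonneg d)
    rwa [← Real.rpow_mul hbase, one_div,
      inv_mul_cancel₀ (show (d:ℝ) ≠ 0 by exact_mod_cast hd.ne'), Real.rpow_one,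
      Real.rpow_natCast] at h1
  have hP1 : ((Measure.pi fun _ : Fin n => ν)
      {dn | t ≤ sSup ((avgNNDist k dn) '' C)}).toReal ≤ 1 := by
    have := prob_le_one (μ := Measure.pi fun _ : Fin n => ν)
      (s := {dn | t ≤ sSup ((avgNNDist k dn) '' C)})
    exact le_trans (ENNReal.toReal_mono ENNReal.one_ne_top this) (by simp)
  have hklogn : (k:ℝ) * Real.log n ≤ C₁ * t ^ d * n := by
    have hC₁n : 0 < C₁ * (n:ℝ) := by positivity
    rw [div_le_iff₀ hC₁n] at htd
    nlinarith [htd]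
  -- trivial case t = 0
  rcases eq_or_lt_of_le ht0 with ht0' | htpos
  · have hrhs : C₂ * Real.exp (Real.log n - C₁ * t ^ d * n / k) = C₂ * n := by
      rw [← ht0', zero_pow hd.ne', mul_zero, zero_mul, zero_div, sub_zero,
        Real.exp_log (by linarith)]
    rw [hrhs]
    calc _ ≤ (1:ℝ) := hP1
      _ = (1:ℝ) * 1 := by ring
      _ ≤ C₂ * n := mul_le_mul hC₂1 hnR (by norm_num) (by linarith)
  -- null case : t > diam C (or C empty)
  by_cases hnull : Δ < t ∨ ¬ C.Nonempty
  · have hzero : (Measure.pi fun _ : Fin n => ν)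
        {dn | t ≤ sSup ((avgNNDist k dn) '' C)} = 0 := by
      rcases (em C.Nonempty) with hCne | hCne
      · rcases hnull with hΔt | h'
        · have hνC : ν Cᶜ = 0 := by
            rw [hν, withDensity_apply _ hCm.compl]
            have hle : ∫⁻ x in Cᶜ, ENNReal.ofReal (g x) ∂volume ≤
                ∫⁻ x in Cᶜ, 0 ∂volume := by
              apply setLIntegral_mono' hCm.compl
              intro x hx
              rw [hg0 x hx]
              simp
            simpa using hle
          have hsub : {dn : Fin n → Euc d | t ≤ sSup ((avgNNDist k dn) '' C)}
              ⊆ ⋃ i : Fin n, {dn | dn i ∉ C} := by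
            intro dn hdn
            simp only [mem_setOf_eq] at hdn
            by_contra hnotin
            simp only [mem_iUnion, mem_setOf_eq, not_exists, not_not] at hnotin
            have hub : sSup ((avgNNDist k dn) '' C) ≤ Δ := by
              apply Real.sSup_le _ hΔ0
              rintro v ⟨x, hx, rfl⟩
              rw [hΔdef]
              exact avg_ub hk1 hkn dn x fun i =>
                Metric.dist_le_diam_of_mem hCcomp.isBounded (hnotin i) hx
            linarith
          refine le_antisymm (le_trans (measure_mono hsub) ?_) zero_le
          refine le_trans (measure_iUnion_le _) ?_
          have hz : ∀ i : Fin n, (Measure.pi fun _ : Fin n => ν)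
              {dn | dn i ∉ C} = 0 := by
            intro i
            have he : {dn : Fin n → Euc d | dn i ∉ C}
                = {dn | ∀ j ∈ ({i} : Finset (Fin n)), dn j ∉ C} := by
              ext dn; simp
            rw [he, cylMeas ν C ({i} : Finset (Fin n)), hνC]
            simp
          simp [hz]
        · exact absurd hCne h'
      · have : {dn : Fin n → Euc d | t ≤ sSup ((avgNNDist k dn) '' C)} = ∅ := by
          ext dn
          simp only [mem_setOf_eq, mem_empty_iff_false, iff_false, not_le]
          rw [not_nonempty_iff_eq_empty.mp hCne]
          simp [Real.sSup_empty, htpos]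
        rw [this]
        simp
    rw [hzero]
    simp only [ENNReal.toReal_zero]
    positivity
  -- main case
  push_neg at hnull
  obtain ⟨htΔ, hCne⟩ := hnull
  -- small n
  by_cases hn2 : n < 2
  · have hn1' : n = 1 := by omega
    have hk1' : k = 1 := by omega
    have htdle : t ^ d ≤ (Δ+1)^d := pow_le_pow_left₀ ht0 (by linarith) d
    have hexpC₂ : Real.exp (C₁ * t ^ d) ≤ C₂ := by
      refine le_trans (Real.exp_le_exp.mpr ?_) hC₂exp
      exact mul_le_mul_of_nonneg_left htdle hC₁pos.le
    refine le_trans hP1 ?_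
    have harg : Real.log n - C₁ * t ^ d * n / k = -(C₁ * t ^ d) := by
      rw [hn1', hk1']
      push_cast
      rw [Real.log_one]
      ring
    rw [harg]
    calc (1:ℝ) = Real.exp (C₁ * t ^ d) * Real.exp (-(C₁ * t ^ d)) := by
          rw [← Real.exp_add]; simp
      _ ≤ C₂ * Real.exp (-(C₁ * t ^ d)) :=
          mul_le_mul_of_nonneg_right hexpC₂ (Real.exp_nonneg _)
  -- main-main case : 2 ≤ n, 0 < t ≤ Δ, C nonempty
  have hn2R : (2:ℝ) ≤ n := by exact_mod_cast (not_lt.mp hn2)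
  set ρ : ℝ := min (t/16) r₀ with hρdef
  have hρpos : 0 < ρ := lt_min (by linarith) hr₀
  have hρr₀ : ρ ≤ r₀ := min_le_right _ _
  have hρ16 : ρ ≤ t/16 := min_le_left _ _
  have hβt : β * t ≤ ρ := by
    apply le_min
    · calc β * t ≤ (1/16) * t := mul_le_mul_of_nonneg_right hβ16 ht0
        _ = t/16 := by ring
    · calc β * t ≤ (r₀/(Δ+1)) * t := mul_le_mul_of_nonneg_right hβr ht0
        _ ≤ (r₀/(Δ+1)) * (Δ+1) := by
            apply mul_le_mul_of_nonneg_left (by linarith) (by positivity)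
        _ = r₀ := by field_simp
  set q : ℝ := a * t ^ d with hqdef
  have htdpos : 0 < t ^ d := by positivity
  have hqpos : 0 < q := by positivity
  have hq : ∀ y ∈ C, ENNReal.ofReal q ≤ ν (Metric.ball y ρ) := by
    intro y hy
    have hbm := ballMass hμmin.le hCm hreg (fun x hx => (hgC x hx).1) hy hρpos hρr₀
    rw [← hν] at hbm
    refine le_trans ?_ hbm
    apply ENNReal.ofReal_le_ofReal
    rw [← hω]
    have hpow : (β*t)^d ≤ ρ^d := pow_le_pow_left₀ (mul_nonneg hβpos.le ht0) hβt d
    rw [mul_pow] at hpow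
    calc q = μmin * (c₀ * (ω * (β^d * t^d))) := by rw [hqdef, ha]; ring
      _ ≤ μmin * (c₀ * (ω * ρ^d)) := by
          apply mul_le_mul_of_nonneg_left _ hμmin.le
          apply mul_le_mul_of_nonneg_left _ hc₀.le
          exact mul_le_mul_of_nonneg_left hpow hωpos.le
  have hq1 : q ≤ 1 := by
    obtain ⟨y₀, hy₀⟩ := hCne
    exact ENNReal.ofReal_le_one.mp ((hq y₀ hy₀).trans prob_le_one)
  have h1q : 0 ≤ 1 - q := by linarith
  clear_value ρ q
  -- separated sets are small
  have hK : ∀ S : Finset (Euc d), ↑S ⊆ C →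
      (∀ x ∈ S, ∀ y ∈ S, x ≠ y → t/8 ≤ dist x y) → (S.card : ℝ) ≤ 1/q := by
    intro S hS1 hS2
    have hdisj : (↑S : Set (Euc d)).PairwiseDisjoint fun y => Metric.ball y ρ := by
      intro x hx y hy hxy
      apply Metric.ball_disjoint_ball
      have := hS2 x (Finset.mem_coe.mp hx) y (Finset.mem_coe.mp hy) hxy
      linarith
    have hmeas := measure_biUnion_finset (μ := ν) hdisj
      (fun y _ => Metric.isOpen_ball.measurableSet)
    have hsum : ENNReal.ofReal ((S.card : ℝ) * q) ≤ 1 := by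
      rw [ENNReal.ofReal_mul (by positivity), ENNReal.ofReal_natCast]
      calc (S.card : ℝ≥0∞) * ENNReal.ofReal q = ∑ _y ∈ S, ENNReal.ofReal q := by
            rw [Finset.sum_const, nsmul_eq_mul]
        _ ≤ ∑ y ∈ S, ν (Metric.ball y ρ) :=
            Finset.sum_le_sum fun y hy => hq y (hS1 hy)
        _ = ν (⋃ y ∈ S, Metric.ball y ρ) := hmeas.symm
        _ ≤ 1 := prob_le_one
    have h := ENNReal.ofReal_le_one.mp hsum
    exact (le_div_iff₀ hqpos).mpr h
  obtain ⟨J, hJsub, hJsep, hJcov⟩ := sep_net (show (0:ℝ) < t/8 by linarith) hK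
  set m := n - k + 1 with hmdef
  have hmdef' : m = n - k + 1 := hmdef
  clear_value m
  -- inclusion of the event in the union of counting events
  have hsub : {dn : Fin n → Euc d | t ≤ sSup ((avgNNDist k dn) '' C)} ⊆
      ⋃ y ∈ J, {dn : Fin n → Euc d |
        (Finset.univ.filter fun i => dn i ∈ Metric.ball y (t/4)).card < k} := by
    intro dn hdn
    simp only [mem_setOf_eq] at hdn
    have h2 : t/2 < sSup ((avgNNDist k dn) '' C) := lt_of_lt_of_le (by linarith) hdn
    obtain ⟨v, ⟨x, hxC, rfl⟩, hv⟩ := exists_lt_of_lt_csSup (hCne.image _) h2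
    obtain ⟨y, hyJ, hyx⟩ := hJcov x hxC
    refine mem_iUnion₂.2 ⟨y, hyJ, ?_⟩
    have hcount := avg_count hk1 dn x hv
    simp only [mem_setOf_eq]
    refine lt_of_le_of_lt (Finset.card_le_card ?_) hcount
    intro i hi
    simp only [Finset.mem_filter, Metric.mem_ball] at hi ⊢
    refine ⟨hi.1, ?_⟩
    have hdc : dist y x = dist x y := dist_comm y x
    calc dist (dn i) x ≤ dist (dn i) y + dist y x := dist_triangle _ _ _
      _ < t/2 := by linarith [hi.2]
  -- measure bound for each counting event
  have hAyB : ∀ y ∈ J, (Measure.pi fun _ : Fin n => ν)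
      {dn : Fin n → Euc d |
        (Finset.univ.filter fun i => dn i ∈ Metric.ball y (t/4)).card < k} ≤
      (n.choose (k-1) : ℝ≥0∞) * ENNReal.ofReal ((1-q)^m) := by
    intro y hy
    refine le_trans (countTail ν hk1 hkn _) ?_
    rw [← hmdef']
    have hballLB : ENNReal.ofReal q ≤ ν (Metric.ball y (t/4)) := by
      refine le_trans (hq y (hJsub hy)) (measure_mono (Metric.ball_subset_ball ?_))
      linarith
    have hcompl : ν (Metric.ball y (t/4))ᶜ ≤ ENNReal.ofReal (1 - q) := by
      rw [measure_compl Metric.isOpen_ball.measurableSet (measure_ne_top ν _), measure_univ]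
      calc 1 - ν (Metric.ball y (t/4)) ≤ 1 - ENNReal.ofReal q :=
            tsub_le_tsub_left hballLB 1
        _ = ENNReal.ofReal (1 - q) := by
            rw [ENNReal.ofReal_sub _ hqpos.le, ENNReal.ofReal_one]
    rw [ENNReal.ofReal_pow h1q]
    exact mul_le_mul_right (pow_le_pow_left' hcompl m) _
  -- total bound
  have htotal : (Measure.pi fun _ : Fin n => ν) {dn | t ≤ sSup ((avgNNDist k dn) '' C)}
      ≤ ENNReal.ofReal ((J.card : ℝ) * ((n.choose (k-1) : ℝ) * (1-q)^m)) := by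
    calc (Measure.pi fun _ : Fin n => ν) {dn | t ≤ sSup ((avgNNDist k dn) '' C)}
        ≤ ∑ y ∈ J, (Measure.pi fun _ : Fin n => ν)
            {dn : Fin n → Euc d |
              (Finset.univ.filter fun i => dn i ∈ Metric.ball y (t/4)).card < k} :=
          le_trans (measure_mono hsub) (measure_biUnion_finset_le J _)
      _ ≤ ∑ _y ∈ J, (n.choose (k-1) : ℝ≥0∞) * ENNReal.ofReal ((1-q)^m) :=
          Finset.sum_le_sum hAyB
      _ = (J.card : ℝ≥0∞) * ((n.choose (k-1) : ℝ≥0∞) * ENNReal.ofReal ((1-q)^m)) := by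
          rw [Finset.sum_const, nsmul_eq_mul]
      _ = ENNReal.ofReal ((J.card : ℝ) * ((n.choose (k-1) : ℝ) * (1-q)^m)) := by
          rw [ENNReal.ofReal_mul (by positivity),
            ENNReal.ofReal_mul (Nat.cast_nonneg _), ENNReal.ofReal_pow h1q,
            ENNReal.ofReal_natCast, ENNReal.ofReal_natCast]
  have hPle : ((Measure.pi fun _ : Fin n => ν)
      {dn | t ≤ sSup ((avgNNDist k dn) '' C)}).toReal ≤
      (J.card : ℝ) * ((n.choose (k-1) : ℝ) * (1-q)^m) :=
    ENNReal.toReal_le_of_le_ofReal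
      (mul_nonneg (Nat.cast_nonneg _)
        (mul_nonneg (Nat.cast_nonneg _) (pow_nonneg h1q m))) htotal
  -- real arithmetic
  have hJcard : (J.card : ℝ) ≤ 1/q := hK J hJsub hJsep
  have hchoose : ((n.choose (k-1) : ℕ) : ℝ) ≤ Real.exp (k * Real.log n) := by
    have h1 : (n.choose (k-1)) ≤ n ^ k :=
      le_trans (Nat.choose_le_pow n (k-1)) (Nat.pow_le_pow_right (by omega) (by omega))
    calc ((n.choose (k-1) : ℕ) : ℝ) ≤ ((n ^ k : ℕ) : ℝ) := by exact_mod_cast h1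
      _ = (n:ℝ) ^ k := by push_cast; ring
      _ = Real.exp (Real.log n) ^ k := by rw [Real.exp_log (by linarith : (0:ℝ) < n)]
      _ = Real.exp (k * Real.log n) := (Real.exp_nat_mul _ k).symm
  have hpow : (1-q)^m ≤ Real.exp (-(q * m)) := by
    calc (1-q)^m ≤ Real.exp (-q) ^ m :=
          pow_le_pow_left₀ h1q (by linarith [Real.add_one_le_exp (-q)]) m
      _ = Real.exp (m * (-q)) := (Real.exp_nat_mul _ m).symm
      _ = Real.exp (-(q * m)) := by ring_nf
  have hmcast : (m:ℝ) = (n:ℝ) - k + 1 := by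
    rw [hmdef']
    push_cast [Nat.cast_sub hkn]
    ring
  have hlog2n : Real.log 2 ≤ Real.log n := Real.log_le_log (by norm_num) (by linarith)
  have htdΔ : t ^ d ≤ (Δ+1)^d := pow_le_pow_left₀ ht0 (by linarith) d
  have hk2 : (k:ℝ) ≤ (n:ℝ)/2 := by
    have e1 : (k:ℝ) * Real.log 2 ≤ (k:ℝ) * Real.log n :=
      mul_le_mul_of_nonneg_left hlog2n (by linarith)
    have e2 : C₁ * t^d * n ≤ C₁ * (Δ+1)^d * n :=
      mul_le_mul_of_nonneg_right (mul_le_mul_of_nonneg_left htdΔ hC₁pos.le) (by linarith)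
    have e3 : C₁ * (Δ+1)^d ≤ Real.log 2/2 := by
      calc C₁ * (Δ+1)^d ≤ (Real.log 2/(2*(Δ+1)^d)) * (Δ+1)^d :=
            mul_le_mul_of_nonneg_right hC₁le hΔ1d.le
        _ = Real.log 2/2 := by field_simp
    have e4 : C₁ * (Δ+1)^d * n ≤ (Real.log 2/2) * n :=
      mul_le_mul_of_nonneg_right e3 (by linarith)
    have echain : (k:ℝ) * Real.log 2 ≤ (n:ℝ)/2 * Real.log 2 := by
      calc (k:ℝ) * Real.log 2 ≤ (k:ℝ) * Real.log n := e1
        _ ≤ C₁ * t^d * n := hklogn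
        _ ≤ C₁ * (Δ+1)^d * n := e2
        _ ≤ (Real.log 2/2) * n := e4
        _ = (n:ℝ)/2 * Real.log 2 := by ring
    exact (mul_le_mul_iff_of_pos_right hlog2).mp echain
  have hmn : (n:ℝ)/2 ≤ (m:ℝ) := by rw [hmcast]; linarith only [hk2]
  have hq_lb : a * Real.log 2 / (C₁ * n) ≤ q := by
    have hnum : Real.log 2 ≤ Real.log n * k := by
      calc Real.log 2 ≤ Real.log n := hlog2n
        _ = Real.log n * 1 := by ring
        _ ≤ Real.log n * k := mul_le_mul_of_nonneg_left hkR hlogn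
    have e1 : Real.log 2 / (C₁*n) ≤ Real.log n * k/(C₁*n) :=
      (div_le_div_iff_of_pos_right (by positivity)).mpr hnum
    have e2 : Real.log 2 / (C₁*n) ≤ t^d := le_trans e1 htd
    rw [hqdef]
    calc a * Real.log 2 / (C₁ * n) = a * (Real.log 2 / (C₁ * n)) := by ring
      _ ≤ a * t^d := mul_le_mul_of_nonneg_left e2 hapos.le
  have hinvq : 1/q ≤ C₁ * n/(a * Real.log 2) := by
    rw [div_le_div_iff₀ hqpos (by positivity : (0:ℝ) < a * Real.log 2)]
    have e : a * Real.log 2 ≤ q * (C₁ * n) := by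
      have := mul_le_mul_of_nonneg_right hq_lb (by positivity : (0:ℝ) ≤ C₁ * n)
      rwa [div_mul_cancel₀ _ (by positivity : (C₁:ℝ) * n ≠ 0)] at this
    linarith only [e]
  have hexp1 : (k:ℝ) * Real.log n - q * m ≤ -(2*C₁*t^d*n) := by
    have hqm : q * ((n:ℝ)/2) ≤ q * m := mul_le_mul_of_nonneg_left hmn hqpos.le
    have h6 : (0:ℝ) ≤ (a - 6*C₁) * t^d * n := by
      apply mul_nonneg (mul_nonneg (by linarith) htdpos.le) (by linarith)
    have hqn : q * ((n:ℝ)/2) = a * t^d * n / 2 := by rw [hqdef]; ring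
    linarith only [hklogn, hqm, hqn, h6]
  have hexp2 : -(2*C₁*(t^d)*n) ≤ -(C₁ * t ^ d * n / k) - C₁*t^d*n := by
    have h : C₁ * t^d * n / k ≤ C₁ * t^d * n := by
      rw [div_le_iff₀ (by linarith : (0:ℝ) < k)]
      have h0 : (0:ℝ) ≤ C₁ * t^d * n := by positivity
      calc C₁ * t^d * n = C₁ * t^d * n * 1 := by ring
        _ ≤ C₁ * t^d * n * k := mul_le_mul_of_nonneg_left hkR h0
    linarith only [h]
  calc ((Measure.pi fun _ : Fin n => ν)
        {dn | t ≤ sSup ((avgNNDist k dn) '' C)}).toReal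
      ≤ (J.card : ℝ) * ((n.choose (k-1) : ℝ) * (1-q)^m) := hPle
    _ ≤ (1/q) * (Real.exp (k * Real.log n) * Real.exp (-(q*m))) := by
        apply mul_le_mul hJcard _ _ (by positivity)
        · exact mul_le_mul hchoose hpow (pow_nonneg h1q m) (Real.exp_nonneg _)
        · exact mul_nonneg (Nat.cast_nonneg _) (pow_nonneg h1q m)
    _ = (1/q) * Real.exp ((k:ℝ) * Real.log n - q*m) := by
        rw [← Real.exp_add]
        ring_nf
    _ ≤ (C₁ * n/(a * Real.log 2)) * Real.exp (-(C₁ * t ^ d * n / k) - C₁*t^d*n) := by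
        apply mul_le_mul hinvq (Real.exp_le_exp.mpr (le_trans hexp1 hexp2))
          (Real.exp_nonneg _) (by positivity)
    _ ≤ (C₁ * n/(a * Real.log 2)) * Real.exp (-(C₁ * t ^ d * n / k)) := by
        apply mul_le_mul_of_nonneg_left (Real.exp_le_exp.mpr ?_) (by positivity)
        have h0 : (0:ℝ) ≤ C₁ * t^d * n := by positivity
        linarith only [h0]
    _ = (C₁/(a * Real.log 2)) * ((n:ℝ) * Real.exp (-(C₁ * t ^ d * n / k))) := by ring
    _ ≤ C₂ * ((n:ℝ) * Real.exp (-(C₁ * t ^ d * n / k))) := by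
        apply mul_le_mul_of_nonneg_right hC₂q
        positivity
    _ = C₂ * Real.exp (Real.log n - C₁ * t ^ d * n / k) := by
        rw [Real.exp_sub, Real.exp_log (by linarith : (0:ℝ) < n), Real.exp_neg]
        ring
end
end
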